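/- arXiv:2512.18136 — 10 statements merged into one kernel-verified Lean document; each statement's English description precedes it below -/
import Mathlib

section
/- Let S = ⟨a₁, ..., aₜ⟩ be a numerical semigroup with defining toric ideal I ⊂ k[x₁,...,xₜ] (kernel of xᵢ ↦ t^{aᵢ}). If J ⊆ I is a binomial ideal such that dim_k k[x₁,...,xₜ]/(J + (x₁)) = a₁, then J = I. -/
/-!
For `s` in the Apéry set `Ap(S, a₀) = {s ∈ S | s - a₀ ∉ S}` of `S` the coefficient of `t ^ s` in
`φ(f)`, where `φ : xᵢ ↦ t ^ aᵢ`, gives a linear map `θ : K[x] → K ^ (ℤ/a₀)`. It kills `I + (x₀)`,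
because `φ(x₀ f)` is supported on `a₀ + S`, and it is onto, because `gcd aᵢ = 1` makes every
residue class mod `a₀` meet `S`, hence meet `Ap(S, a₀)` in its least element. As
`J + (x₀) ⊆ I + (x₀) ⊆ ker θ` and `dim K[x]/(J + (x₀)) = a₀`, the induced map
`K[x]/(J + (x₀)) → K ^ (ℤ/a₀)` is bijective, so `I ⊆ J + (x₀)`.

Grade `K[x]` by `deg xᵢ = aᵢ`. Then `I` is homogeneous and prime with `x₀ ∉ I`, and `J` is
homogeneous since its binomial generators lie in `I`. If `p ∈ I` is homogeneous of degree `d`,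
write `p = g + h x₀` with `g ∈ J`; taking degree-`d` components, `h_{d - a₀} x₀ ∈ I`, so
`h_{d - a₀} ∈ I`, which lies in `J` by induction on the degree. Hence `I ⊆ J`.
-/

open MvPolynomial

section GradedRing

open DirectSum

variable {σ A : Type*} [CommRing A] [SetLike σ A] [AddSubmonoidClass σ A] (𝒜 : ℕ → σ)
  [GradedRing 𝒜]

theorem Ideal.IsHomogeneous.le_of_le_sup_span_singleton {J P : Ideal A}
    (hJ : J.IsHomogeneous 𝒜) (hP : P.IsHomogeneous 𝒜) [P.IsPrime] (hJP : J ≤ P)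
    {x : A} {e : ℕ} (hx : x ∈ 𝒜 e) (he : 0 < e) (hxP : x ∉ P)
    (hPJ : P ≤ J ⊔ Ideal.span {x}) : P ≤ J := by
  have homogeneous_mem : ∀ d, ∀ p ∈ 𝒜 d, p ∈ P → p ∈ J := by
    intro d
    induction d using Nat.strong_induction_on with
    | _ d ih =>
      intro p hpd hpP
      obtain ⟨g, hgJ, y, hy, rfl⟩ := Submodule.mem_sup.mp (hPJ hpP)
      obtain ⟨h, rfl⟩ := Ideal.mem_span_singleton'.mp hy
      have hgd : (decompose 𝒜 g d : A) ∈ J := hJ d hgJ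
      have hp := decompose_of_mem_same 𝒜 hpd
      rw [decompose_add, DirectSum.add_apply, AddMemClass.coe_add] at hp
      by_cases hed : e ≤ d
      · rw [coe_decompose_mul_of_right_mem_of_le 𝒜 hx hed] at hp
        have hhP : (decompose 𝒜 h (d - e) : A) ∈ P := by
          refine (Ideal.IsPrime.mem_or_mem ‹_› ?_).resolve_right hxP
          rw [eq_sub_of_add_eq' hp]
          exact sub_mem hpP (hJP hgd)
        have hhJ := ih (d - e) (by omega) _ (SetLike.coe_mem _) hhP
        rw [← hp]
        exact add_mem hgd (J.mul_mem_right _ hhJ)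
      · rw [coe_decompose_mul_of_right_mem_of_not_le 𝒜 hx hed, add_zero] at hp
        rwa [← hp]
  intro p hp
  rw [hJ.mem_iff]
  exact fun i => homogeneous_mem i _ (SetLike.coe_mem _) (hP i hp)

end GradedRing

open Module in
theorem Ideal.ker_le_of_finrank_quotient_eq {K A V : Type*} [Field K] [CommRing A] [Algebra K A]
    [AddCommGroup V] [Module K V] {J : Ideal A} [FiniteDimensional K (A ⧸ J)]
    (θ : A →ₗ[K] V) (hθ : Function.Surjective θ) (hJθ : J.restrictScalars K ≤ LinearMap.ker θ)
    (h : finrank K (A ⧸ J) = finrank K V) : LinearMap.ker θ ≤ J.restrictScalars K := by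
  let θJ : (A ⧸ J) →ₗ[K] V :=
    (J.restrictScalars K).liftQ θ hJθ ∘ₗ (Submodule.Quotient.restrictScalarsEquiv K J).symm
  have hθJ_mk (x : A) : θJ (Ideal.Quotient.mk J x) = θ x := rfl
  have hθJ : Function.Surjective θJ := by
    intro v
    obtain ⟨x, rfl⟩ := hθ v
    exact ⟨Ideal.Quotient.mk J x, hθJ_mk x⟩
  have : FiniteDimensional K V := Module.Finite.of_surjective θJ hθJ
  have hinj := (LinearMap.injective_iff_surjective_of_finrank_eq_finrank h).mpr hθJ
  intro x hx
  rw [Submodule.restrictScalars_mem, ← Ideal.Quotient.eq_zero_iff_mem]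
  exact hinj (by rw [hθJ_mk, LinearMap.mem_ker.mp hx, map_zero])

theorem Nat.setGcd_range {ι : Type*} [Fintype ι] (f : ι → ℕ) :
    Nat.setGcd (Set.range f) = Finset.univ.gcd f :=
  Nat.dvd_antisymm (Finset.dvd_gcd fun i _ => Nat.setGcd_dvd_of_mem ⟨i, rfl⟩)
    (Nat.dvd_setGcd_iff.mpr <| by
      rintro _ ⟨i, rfl⟩
      exact Finset.gcd_dvd (Finset.mem_univ i))

theorem Nat.exists_mem_closure_natCast_eq {s : Set ℕ} (hs : Nat.setGcd s = 1) {n : ℕ} [NeZero n]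
    (r : ZMod n) : ∃ m ∈ AddSubmonoid.closure s, (m : ZMod n) = r := by
  obtain ⟨N, hN⟩ := Nat.exists_mem_closure_of_ge s
  refine ⟨r.val + N * n, hN _ ?_ (by simp [hs]), by simp⟩
  nlinarith [NeZero.pos n]

namespace AddSubmonoid

/-- `{s ∈ S | s - n ∉ S}`, written without truncated subtraction. -/
def aperySet (S : AddSubmonoid ℕ) (n : ℕ) : Set ℕ := {s | s ∈ S ∧ ∀ u ∈ S, n + u ≠ s}

theorem exists_mem_aperySet_natCast_eq (S : AddSubmonoid ℕ) {n : ℕ} (hn : 0 < n) {r : ZMod n}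
    (h : ∃ s ∈ S, (s : ZMod n) = r) : ∃ s ∈ S.aperySet n, (s : ZMod n) = r := by
  classical
  obtain ⟨hsS, hsr⟩ := Nat.find_spec h
  refine ⟨Nat.find h, ⟨hsS, fun u hu hus => Nat.find_min h (m := u) (by omega) ⟨hu, ?_⟩⟩, hsr⟩
  rw [← hsr, ← hus]
  simp

end AddSubmonoid

namespace Polynomial

open Classical in
noncomputable def aperyCoeffs (R : Type*) [CommSemiring R] (S : AddSubmonoid ℕ) (n : ℕ) :
    R[X] →ₗ[R] ZMod n → R :=
  lsum fun k => if k ∈ S.aperySet n then LinearMap.single R (fun _ => R) (k : ZMod n) else 0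

variable {R : Type*} [CommSemiring R] {S : AddSubmonoid ℕ} {n k : ℕ}

theorem aperyCoeffs_monomial_of_mem (hk : k ∈ S.aperySet n) (c : R) :
    aperyCoeffs R S n (monomial k c) = Pi.single (k : ZMod n) c := by
  simp [aperyCoeffs, sum_monomial_index, hk]

theorem aperyCoeffs_monomial_of_notMem (hk : k ∉ S.aperySet n) (c : R) :
    aperyCoeffs R S n (monomial k c) = 0 := by
  simp [aperyCoeffs, sum_monomial_index, hk]

end Polynomial

attribute [local instance] MvPolynomial.weightedGradedAlgebra

namespace MvPolynomial

variable {σ : Type*} (w : σ → ℕ)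

section CommSemiring

variable {R : Type*} [CommSemiring R]

theorem aeval_X_pow_monomial (m : σ →₀ ℕ) (c : R) :
    aeval (fun i => (Polynomial.X : Polynomial R) ^ w i) (monomial m c) =
      Polynomial.monomial (Finsupp.weight w m) c := by
  rw [aeval_monomial, Polynomial.algebraMap_eq, ← Polynomial.C_mul_X_pow_eq_monomial]
  congr 1
  simp only [Finsupp.prod, ← pow_mul, Finset.prod_pow_eq_pow_sum, Finsupp.weight_apply,
    Finsupp.sum, smul_eq_mul, mul_comm]

theorem coeff_aeval_X_pow_weightedHomogeneousComponent (f : MvPolynomial σ R) (d n : ℕ) :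
    (aeval (fun i => (Polynomial.X : Polynomial R) ^ w i)
        (weightedHomogeneousComponent w d f)).coeff n =
      if n = d then (aeval (fun i => (Polynomial.X : Polynomial R) ^ w i) f).coeff n else 0 := by
  induction f using induction_on' with
  | monomial m c =>
    by_cases hm : Finsupp.weight w m = d
    · rw [(isWeightedHomogeneous_monomial w m c hm).weightedHomogeneousComponent_same,
        aeval_X_pow_monomial, Polynomial.coeff_monomial]
      split_ifs <;> first | rfl | omega
    · rw [(isWeightedHomogeneous_monomial w m c rfl).weightedHomogeneousComponent_ne d (Ne.symm hm),
        map_zero, aeval_X_pow_monomial, Polynomial.coeff_monomial, Polynomial.coeff_zero]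
      split_ifs <;> first | rfl | omega
  | add p q hp hq =>
    rw [map_add, map_add, Polynomial.coeff_add, hp, hq, map_add, Polynomial.coeff_add]
    split_ifs <;> simp

theorem isHomogeneous_ker_aeval_X_pow :
    (RingHom.ker (aeval fun i => (Polynomial.X : Polynomial R) ^ w i)).IsHomogeneous
      (weightedHomogeneousSubmodule R w) := by
  intro d f hf
  rw [RingHom.mem_ker] at hf ⊢
  rw [show (DirectSum.decompose (weightedHomogeneousSubmodule R w) f d : MvPolynomial σ R) =
    weightedHomogeneousComponent w d f from weightedDecomposition.decompose'_apply R w f d]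
  ext n
  rw [coeff_aeval_X_pow_weightedHomogeneousComponent, hf]
  simp

theorem weight_mem_closure_range (m : σ →₀ ℕ) :
    Finsupp.weight w m ∈ AddSubmonoid.closure (Set.range w) :=
  AddSubmonoid.mem_closure_range_iff.mpr ⟨m, rfl⟩

variable (i₀ : σ)

theorem aperyCoeffs_aeval_X_mul (f : MvPolynomial σ R) :
    Polynomial.aperyCoeffs R (AddSubmonoid.closure (Set.range w)) (w i₀)
      (aeval (fun i => (Polynomial.X : Polynomial R) ^ w i) (X i₀ * f)) = 0 := by
  classical
  induction f using induction_on' with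
  | monomial m c =>
    rw [← pow_one (X i₀), ← monomial_single_add, aeval_X_pow_monomial,
      Polynomial.aperyCoeffs_monomial_of_notMem]
    rintro ⟨-, hnot⟩
    exact hnot _ (weight_mem_closure_range w m) (by simp [Finsupp.weight_single])
  | add p q hp hq => rw [mul_add, map_add, map_add, hp, hq, add_zero]

theorem aperyCoeffs_aeval_eq_zero_of_mem_sup {f : MvPolynomial σ R}
    (hf : f ∈ RingHom.ker (aeval fun i => (Polynomial.X : Polynomial R) ^ w i) ⊔
      Ideal.span {X i₀}) :
    Polynomial.aperyCoeffs R (AddSubmonoid.closure (Set.range w)) (w i₀)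
      (aeval (fun i => (Polynomial.X : Polynomial R) ^ w i) f) = 0 := by
  obtain ⟨g, hg, y, hy, rfl⟩ := Submodule.mem_sup.mp hf
  obtain ⟨h, rfl⟩ := Ideal.mem_span_singleton'.mp hy
  rw [map_add, map_add, RingHom.mem_ker.mp hg, map_zero, mul_comm, aperyCoeffs_aeval_X_mul,
    add_zero]

theorem surjective_aperyCoeffs_aeval (hw : 0 < w i₀) (hgcd : Nat.setGcd (Set.range w) = 1) :
    Function.Surjective fun f : MvPolynomial σ R =>
      Polynomial.aperyCoeffs R (AddSubmonoid.closure (Set.range w)) (w i₀)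
        (aeval (fun i => (Polynomial.X : Polynomial R) ^ w i) f) := by
  have : NeZero (w i₀) := ⟨hw.ne'⟩
  have hApery : ∀ r : ZMod (w i₀), ∃ m : σ →₀ ℕ,
      Finsupp.weight w m ∈ (AddSubmonoid.closure (Set.range w)).aperySet (w i₀) ∧
        (Finsupp.weight w m : ZMod (w i₀)) = r := by
    intro r
    obtain ⟨s, ⟨hsS, hs⟩, hsr⟩ := AddSubmonoid.exists_mem_aperySet_natCast_eq _ hw
      (Nat.exists_mem_closure_natCast_eq hgcd r)
    obtain ⟨m, rfl⟩ := AddSubmonoid.mem_closure_range_iff.mp hsS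
    exact ⟨m, ⟨hsS, hs⟩, hsr⟩
  choose m hmA hmr using hApery
  intro v
  refine ⟨∑ r, monomial (m r) (v r), ?_⟩
  simp only [map_sum, aeval_X_pow_monomial, Polynomial.aperyCoeffs_monomial_of_mem (hmA _), hmr]
  exact Finset.univ_sum_single v

end CommSemiring

theorem isHomogeneousElem_of_monomial_sub_monomial_mem_ker {R : Type*} [CommRing R]
    [Nontrivial R] {m₁ m₂ : σ →₀ ℕ}
    (h : monomial m₁ (1 : R) - monomial m₂ 1 ∈
      RingHom.ker (aeval fun i => (Polynomial.X : Polynomial R) ^ w i)) :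
    SetLike.IsHomogeneousElem (weightedHomogeneousSubmodule R w)
      (monomial m₁ (1 : R) - monomial m₂ 1) := by
  rw [RingHom.mem_ker, map_sub, aeval_X_pow_monomial, aeval_X_pow_monomial, sub_eq_zero,
    Polynomial.monomial_eq_monomial_iff] at h
  obtain ⟨hw, -⟩ | ⟨h10, -⟩ := h
  · exact ⟨_, sub_mem (isWeightedHomogeneous_monomial w m₁ 1 rfl)
      (isWeightedHomogeneous_monomial w m₂ 1 hw.symm)⟩
  · exact absurd h10 one_ne_zero

end MvPolynomial

/-- **Gastinger's criterion.** Let `S = ⟨a 0, …, a (t-1)⟩` be a numerical semigroup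
(the `a i` are positive with gcd 1) with defining toric ideal `I`, the kernel of
`X i ↦ T ^ (a i)`.  If `J ⊆ I` is a binomial ideal such that
`dim_K K[x]/(J + (x 0)) = a 0`, then `J = I`. -/
theorem gastinger_criterion (K : Type*) [Field K] (t : ℕ) (ht : 0 < t)
    (a : Fin t → ℕ) (hpos : ∀ i, 0 < a i) (hgcd : Finset.univ.gcd a = 1)
    (I : Ideal (MvPolynomial (Fin t) K))
    (hI : I = RingHom.ker (aeval fun i => (Polynomial.X : Polynomial K) ^ (a i)).toRingHom)
    (J : Ideal (MvPolynomial (Fin t) K)) (hJI : J ≤ I)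
    (G : Set (MvPolynomial (Fin t) K))
    (hbin : ∀ g ∈ G, ∃ m₁ m₂ : Fin t →₀ ℕ, g = monomial m₁ 1 - monomial m₂ 1)
    (hJG : J = Ideal.span G)
    (hdim : Module.finrank K
      (MvPolynomial (Fin t) K ⧸ (J ⊔ Ideal.span {X (⟨0, ht⟩ : Fin t)})) = a ⟨0, ht⟩) :
    J = I := by
  have : I.IsPrime := hI ▸ RingHom.ker_isPrime _
  subst hI
  set x₀ : Fin t := ⟨0, ht⟩
  have : NeZero (a x₀) := ⟨(hpos x₀).ne'⟩
  have : FiniteDimensional K (MvPolynomial (Fin t) K ⧸ (J ⊔ Ideal.span {X x₀})) :=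
    .of_finrank_pos (hdim ▸ hpos x₀)
  let θ := Polynomial.aperyCoeffs K (AddSubmonoid.closure (Set.range a)) (a x₀) ∘ₗ
    (aeval fun i => (Polynomial.X : Polynomial K) ^ (a i)).toLinearMap
  have hθ : Function.Surjective θ :=
    surjective_aperyCoeffs_aeval a x₀ (hpos x₀) (by rw [Nat.setGcd_range, hgcd])
  have hJθ : (J ⊔ Ideal.span {X x₀}).restrictScalars K ≤ LinearMap.ker θ := fun f hf =>
    aperyCoeffs_aeval_eq_zero_of_mem_sup a x₀ (sup_le_sup_right hJI _ hf)
  have hIJ : RingHom.ker (aeval fun i => (Polynomial.X : Polynomial K) ^ (a i)) ≤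
      J ⊔ Ideal.span {X x₀} := fun f hf =>
    Ideal.ker_le_of_finrank_quotient_eq θ hθ hJθ
      (by rw [hdim, Module.finrank_fintype_fun_eq_card, ZMod.card])
      (by simp [θ, RingHom.mem_ker.mp hf])
  have hJ : J.IsHomogeneous (weightedHomogeneousSubmodule K a) := by
    rw [hJG]
    refine Ideal.homogeneous_span _ _ fun g hg => ?_
    obtain ⟨m₁, m₂, rfl⟩ := hbin g hg
    exact isHomogeneousElem_of_monomial_sub_monomial_mem_ker a (hJI (hJG ▸ Ideal.subset_span hg))
  have hx₀ : X (R := K) x₀ ∉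
      RingHom.ker (aeval fun i => (Polynomial.X : Polynomial K) ^ (a i)) := by
    simp [RingHom.mem_ker, (hpos x₀).ne']
  exact le_antisymm hJI (hJ.le_of_le_sup_span_singleton _ (isHomogeneous_ker_aeval_X_pow a) hJI
    (isWeightedHomogeneous_X K a x₀) (hpos x₀) hx₀ hIJ)
end

section
/- Let e, k, j be positive integers with j + k ≤ e - 1, k ≤ e/2, and j ≥ k+1. Then the Frobenius number of S_k^e(j) = ⟨e,...,e+j-1, e+j+k,...,2e-1⟩ is e + j + k - 1 and its genus is e + k - 1. -/
/-- The set of gaps of a numerical semigroup (submonoid of ℕ). -/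
def gapsOf (S : AddSubmonoid ℕ) : Set ℕ := {n | n ∉ S}

/-- The Frobenius number: the largest gap. -/
noncomputable def frobeniusNumber (S : AddSubmonoid ℕ) : ℕ := sSup (gapsOf S)

/-- The genus: the number of gaps. -/
noncomputable def genusOf (S : AddSubmonoid ℕ) : ℕ := Nat.card (gapsOf S)

/-- A numerical semigroup is symmetric iff 2g = F + 1. -/
def IsSymmetricNS (S : AddSubmonoid ℕ) : Prop :=
  2 * genusOf S = frobeniusNumber S + 1

/-- The Sally type semigroup `S_k^e(j) = ⟨e,…,e+j-1, e+j+k,…,2e-1⟩`. -/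
def sally (e k j : ℕ) : AddSubmonoid ℕ :=
  AddSubmonoid.closure (Set.Ico e (e + j) ∪ Set.Ico (e + j + k) (2 * e))

/-! The sums of two small generators `e, …, e + j - 1` fill `[2e, 2e + 2j - 1) ⊇ [2e, 2e + j + k)`
because `k < j`; with the large generators this gives `e` consecutive elements `e + j + k, …,
2e + j + k - 1` of `S_k^e(j)`, and adding copies of `e` gives every larger integer. Conversely, since
`j + k ≤ e`, the set `{0} ∪ [e, e + j) ∪ [e + j + k, ∞)` is closed under addition, so it is the whole
semigroup and the gaps are `[1, e) ∪ [e + j, e + j + k)`. -/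

theorem AddSubmonoid.mem_of_Ico_subset_of_le {S : AddSubmonoid ℕ} {m d n : ℕ} (hd : 0 < d)
    (hdS : d ∈ S) (hS : Set.Ico m (m + d) ⊆ S) (hn : m ≤ n) : n ∈ S := by
  induction n using Nat.strong_induction_on with
  | _ n ih =>
    by_cases hnd : n < m + d
    · exact hS ⟨hn, hnd⟩
    · have hsplit : n = (n - d) + d := by omega
      rw [hsplit]
      exact S.add_mem (ih (n - d) (by omega) (by omega)) hdS

namespace Sally

variable {e k j : ℕ}

theorem Ico_subset_sally : Set.Ico e (e + j) ⊆ sally e k j :=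
  fun _ hn => AddSubmonoid.subset_closure (Or.inl hn)

theorem Ico_add_subset_sally : Set.Ico (e + j + k) (2 * e) ⊆ sally e k j :=
  fun _ hn => AddSubmonoid.subset_closure (Or.inr hn)

theorem Ico_two_mul_subset_sally : Set.Ico (2 * e) (2 * e + 2 * j - 1) ⊆ sally e k j := by
  rintro n ⟨hlo, hhi⟩
  by_cases hsmall : n < 2 * e + j
  · have hsplit : n = e + (n - e) := by omega
    rw [hsplit]
    exact (sally e k j).add_mem (Ico_subset_sally ⟨le_rfl, by omega⟩)
      (Ico_subset_sally ⟨by omega, by omega⟩)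
  · have hsplit : n = (e + j - 1) + (n - (e + j - 1)) := by omega
    rw [hsplit]
    exact (sally e k j).add_mem (Ico_subset_sally ⟨by omega, by omega⟩)
      (Ico_subset_sally ⟨by omega, by omega⟩)

theorem mem_sally_of_le (he : 0 < e) (hkj : k < j) {n : ℕ} (hn : e + j + k ≤ n) :
    n ∈ sally e k j := by
  refine AddSubmonoid.mem_of_Ico_subset_of_le he (Ico_subset_sally ⟨le_rfl, by omega⟩) ?_ hn
  rintro m ⟨hlo, hhi⟩
  by_cases hm : m < 2 * e
  · exact Ico_add_subset_sally ⟨hlo, hm⟩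
  · exact Ico_two_mul_subset_sally ⟨by omega, by omega⟩

theorem mem_sally_iff (hjk : j + k < e) (hkj : k < j) {n : ℕ} :
    n ∈ sally e k j ↔ n = 0 ∨ (e ≤ n ∧ n < e + j) ∨ e + j + k ≤ n := by
  constructor
  · intro hn
    induction hn using AddSubmonoid.closure_induction with
    | mem x hx => rcases hx with ⟨h1, h2⟩ | ⟨h1, h2⟩ <;> omega
    | zero => omega
    | add a b _ _ iha ihb => omega
  · rintro (rfl | hsmall | hlarge)
    · exact (sally e k j).zero_mem
    · exact Ico_subset_sally hsmall
    · exact mem_sally_of_le (by omega) hkj hlarge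

theorem gapsOf_sally (hjk : j + k < e) (hkj : k < j) :
    gapsOf (sally e k j) = ↑(Finset.Ico 1 e ∪ Finset.Ico (e + j) (e + j + k)) := by
  ext n
  simp only [gapsOf, Set.mem_ofPred_eq, mem_sally_iff hjk hkj, Finset.coe_union, Set.mem_union,
    Finset.coe_Ico, Set.mem_Ico]
  omega

theorem frobeniusNumber_sally (hk : 0 < k) (hjk : j + k < e) (hkj : k < j) :
    frobeniusNumber (sally e k j) = e + j + k - 1 := by
  refine IsGreatest.csSup_eq ⟨?_, fun n hn => ?_⟩ <;>
    simp only [gapsOf_sally hjk hkj, Finset.coe_union, Set.mem_union, Finset.coe_Ico,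
      Set.mem_Ico] at * <;>
    omega

theorem genusOf_sally (hjk : j + k < e) (hkj : k < j) :
    genusOf (sally e k j) = e + k - 1 := by
  have hdisj : Disjoint (Finset.Ico 1 e) (Finset.Ico (e + j) (e + j + k)) :=
    Finset.Ico_disjoint_Ico_consecutive 1 e (e + j + k) |>.mono_right
      (Finset.Ico_subset_Ico_left (by omega))
  rw [genusOf, gapsOf_sally hjk hkj, Nat.card_coe_set_eq, Set.ncard_coe_finset,
    Finset.card_union_of_disjoint hdisj, Nat.card_Ico, Nat.card_Ico]
  omega

end Sally

theorem sally_frobenius_genus_of_j_ge_k_add_one_general (e k j : ℕ) (hk : 0 < k)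
    (hjk : j + k ≤ e - 1) (hjk' : k + 1 ≤ j) :
    frobeniusNumber (sally e k j) = e + j + k - 1 ∧
    genusOf (sally e k j) = e + k - 1 := by
  have hjk : j + k < e := by omega
  exact ⟨Sally.frobeniusNumber_sally hk hjk hjk', Sally.genusOf_sally hjk hjk'⟩

theorem sally_frobenius_genus_of_j_ge_k_add_one (e k j : ℕ) (he : 0 < e) (hk : 0 < k)
    (hj : 0 < j) (hjk : j + k ≤ e - 1) (hke : 2 * k ≤ e) (hjk' : k + 1 ≤ j) :
    frobeniusNumber (sally e k j) = e + j + k - 1 ∧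
    genusOf (sally e k j) = e + k - 1 :=
  sally_frobenius_genus_of_j_ge_k_add_one_general e k j hk hjk hjk'
end

section
/- Let e, k, j be positive integers with j + k ≤ e - 1, j ≤ k, 2j ≥ k+1 (and not both e = 2k and j = 1). Then the Frobenius number of S_k^e(j) is 2e + j + k - 1 and its genus is e + 2k - j. -/
lemma mem_sally_gen {e k j n : ℕ}
    (h : (e ≤ n ∧ n < e + j) ∨ (e + j + k ≤ n ∧ n < 2 * e)) : n ∈ sally e k j := by
  apply AddSubmonoid.subset_closure
  rcases h with h | h
  · exact Or.inl (Set.mem_Ico.2 h)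
  · exact Or.inr (Set.mem_Ico.2 h)

lemma sally_mem3 {e k j n : ℕ} (hj : 0 < j) (he : j + k + 1 ≤ e)
    (h : (e ≤ n ∧ n < e + j) ∨ (e + j + k ≤ n ∧ n ≤ 2 * e + 2 * j - 2)) :
    n ∈ sally e k j := by
  rcases h with h | h
  · exact mem_sally_gen (Or.inl h)
  · by_cases hn : n < 2 * e
    · exact mem_sally_gen (Or.inr ⟨h.1, hn⟩)
    · by_cases h2 : n ≤ 2 * e + j - 1
      · have hrw : n = e + (n - e) := by omega
        rw [hrw]
        exact add_mem (mem_sally_gen (Or.inl (by omega))) (mem_sally_gen (Or.inl (by omega)))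
      · have hrw : n = (e + j - 1) + (n - (e + j - 1)) := by omega
        rw [hrw]
        exact add_mem (mem_sally_gen (Or.inl (by omega))) (mem_sally_gen (Or.inl (by omega)))

lemma sally_mem4 {e k j : ℕ} (hj : 0 < j) (hjle : j ≤ k) (he : j + k + 1 ≤ e)
    (h2j : k + 1 ≤ 2 * j) :
    ∀ n, 2 * e + j + k ≤ n → n ∈ sally e k j := by
  intro n
  induction n using Nat.strong_induction_on with
  | _ n ih =>
    intro hn
    by_cases h1 : 3 * e + j + k ≤ n
    · have hrw : n = e + (n - e) := by omega
      rw [hrw]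
      exact add_mem (mem_sally_gen (Or.inl (by omega))) (ih (n - e) (by omega) (by omega))
    · by_cases h2 : n ≤ 3 * e + j - 2
      · by_cases h3 : n ≤ 2 * e + 2 * j + k - 1
        · have hrw : n = (n - (e + j + k)) + (e + j + k) := by omega
          rw [hrw]
          exact add_mem (mem_sally_gen (Or.inl (by omega))) (mem_sally_gen (Or.inr (by omega)))
        · have hrw : n = (e + j - 1) + (n - (e + j - 1)) := by omega
          rw [hrw]
          exact add_mem (mem_sally_gen (Or.inl (by omega))) (mem_sally_gen (Or.inr (by omega)))
      · by_cases h4 : 3 * e + j + k - 1 ≤ n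
        · have hrw : n = (2 * e - 1) + (e + j + k) := by omega
          rw [hrw]
          exact add_mem (mem_sally_gen (Or.inr (by omega))) (mem_sally_gen (Or.inr (by omega)))
        · have hrw : n = (e + j - 1) + (n - (e + j - 1)) := by omega
          rw [hrw]
          exact add_mem (mem_sally_gen (Or.inl (by omega))) (sally_mem3 hj he (Or.inr (by omega)))

lemma mem_sally_iff {e k j : ℕ} (hj : 0 < j) (hjle : j ≤ k) (he : j + k + 1 ≤ e)
    (h2j : k + 1 ≤ 2 * j) (n : ℕ) :
    n ∈ sally e k j ↔ n = 0 ∨ (e ≤ n ∧ n < e + j) ∨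
      (e + j + k ≤ n ∧ n ≤ 2 * e + 2 * j - 2) ∨ 2 * e + j + k ≤ n := by
  constructor
  · intro hn
    have hle : sally e k j ≤
        { carrier := {m | m = 0 ∨ (e ≤ m ∧ m < e + j) ∨
            (e + j + k ≤ m ∧ m ≤ 2 * e + 2 * j - 2) ∨ 2 * e + j + k ≤ m},
          zero_mem' := Or.inl rfl,
          add_mem' := by
            intro a b ha hb
            simp only [Set.mem_setOf_eq] at *
            omega } := by
      apply AddSubmonoid.closure_le.2
      rintro m hm
      simp only [Set.mem_union, Set.mem_Ico] at hm
      show m = 0 ∨ (e ≤ m ∧ m < e + j) ∨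
        (e + j + k ≤ m ∧ m ≤ 2 * e + 2 * j - 2) ∨ 2 * e + j + k ≤ m
      omega
    exact hle hn
  · rintro (rfl | h | h | h)
    · exact zero_mem _
    · exact sally_mem3 hj he (Or.inl h)
    · exact sally_mem3 hj he (Or.inr h)
    · exact sally_mem4 hj hjle he h2j n h

theorem sally_frobenius_genus_of_j_le_k (e k j : ℕ) (he : 0 < e) (hk : 0 < k)
    (hj : 0 < j) (hjk : j + k ≤ e - 1) (hjle : j ≤ k) (h2j : k + 1 ≤ 2 * j)
    (hne : ¬ (e = 2 * k ∧ j = 1)) :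
    frobeniusNumber (sally e k j) = 2 * e + j + k - 1 ∧
    genusOf (sally e k j) = e + 2 * k - j := by

  have he' : j + k + 1 ≤ e := by omega
  have hgaps : gapsOf (sally e k j) =
      ↑(Finset.Icc 1 (e - 1) ∪ Finset.Icc (e + j) (e + j + k - 1) ∪
        Finset.Icc (2 * e + 2 * j - 1) (2 * e + j + k - 1)) := by
    ext n
    simp only [gapsOf, Set.mem_setOf_eq, mem_sally_iff hj hjle he' h2j, Finset.coe_union,
      Set.mem_union, Finset.mem_coe, Finset.mem_Icc]
    omega
  constructor
  · rw [frobeniusNumber, hgaps]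
    apply IsGreatest.csSup_eq
    constructor
    · simp only [Finset.coe_union, Set.mem_union, Finset.mem_coe, Finset.mem_Icc]
      omega
    · intro x hx
      simp only [Finset.coe_union, Set.mem_union, Finset.mem_coe, Finset.mem_Icc] at hx
      omega
  · rw [genusOf, hgaps, Nat.card_coe_set_eq, Set.ncard_coe_finset]
    rw [Finset.card_union_of_disjoint, Finset.card_union_of_disjoint]
    · simp only [Nat.card_Icc]
      omega
    · simp only [Finset.disjoint_left, Finset.mem_Icc]
      omega
    · simp only [Finset.disjoint_left, Finset.mem_union, Finset.mem_Icc, not_and, not_le]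
      omega
end

section
/- Let e, k, j be positive integers with j + k ≤ e - 1 and j ≤ k. Then the interval [2e+2j-1, 2e+j+k-1] consists entirely of gaps of the semigroup S_k^e(j) = ⟨e,...,e+j-1, e+j+k,...,2e-1⟩, i.e., no element 2e+2j+u with -1 ≤ u ≤ k-j-1 belongs to S_k^e(j). -/
/-!
Every generator of `S_k^e(j)` is at least `e`, so an element below `3e` is `0`, a generator, or a
sum of two generators. The interval lies in `[2e, 3e)`, and a sum of two generators is either at
most `2(e+j-1)` (both small) or at least `e + (e+j+k)` (one large), so it misses the interval.
-/

open Pointwise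

theorem Nat.eq_zero_or_mem_or_mem_add_or_three_mul_le_of_mem_closure {e : ℕ} {s : Set ℕ}
    (hs : ∀ x ∈ s, e ≤ x) {y : ℕ} (hy : y ∈ AddSubmonoid.closure s) :
    y = 0 ∨ y ∈ s ∨ y ∈ s + s ∨ 3 * e ≤ y := by
  have hss : ∀ x ∈ s + s, 2 * e ≤ x := by
    rintro _ ⟨a, ha, b, hb, rfl⟩
    linarith [hs a ha, hs b hb]
  have hcases : ∀ {x}, x = 0 ∨ x ∈ s ∨ x ∈ s + s ∨ 3 * e ≤ x → x = 0 ∨ x ∈ s ∨ 2 * e ≤ x := by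
    rintro x (hx | hx | hx | hx)
    exacts [.inl hx, .inr (.inl hx), .inr (.inr (hss x hx)), .inr (.inr (by omega))]
  induction hy using AddSubmonoid.closure_induction with
  | mem z hz => exact .inr (.inl hz)
  | zero => exact .inl rfl
  | add a b _ _ iha ihb =>
    obtain rfl | ha | ha := hcases iha
    · simpa using ihb
    · obtain rfl | hb | hb := hcases ihb
      · simpa using iha
      · exact .inr (.inr (.inl (Set.add_mem_add ha hb)))
      · exact .inr (.inr (.inr (by linarith [hs a ha])))
    · obtain rfl | hb | hb := hcases ihb
      · simpa using iha
      · exact .inr (.inr (.inr (by linarith [hs b hb])))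
      · exact .inr (.inr (.inr (by omega)))

theorem sally_gap_interval_general (e k j : ℕ) (hj : 0 < j)
    (hjk : j + k ≤ e - 1) :
    ∀ x : ℕ, 2 * e + 2 * j - 1 ≤ x → x ≤ 2 * e + j + k - 1 → x ∉ sally e k j := by
  intro x hx_lo hx_hi hx
  have hgen : ∀ y ∈ Set.Ico e (e + j) ∪ Set.Ico (e + j + k) (2 * e), e ≤ y := by
    intro y hy
    simp only [Set.mem_union, Set.mem_Ico] at hy
    omega
  rcases Nat.eq_zero_or_mem_or_mem_add_or_three_mul_le_of_mem_closure hgen hx with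
    hx | hx | hx | hx
  · omega
  · simp only [Set.mem_union, Set.mem_Ico] at hx
    omega
  · obtain ⟨a, ha, b, hb, rfl⟩ := Set.mem_add.1 hx
    simp only [Set.mem_union, Set.mem_Ico] at ha hb
    omega
  · omega

theorem sally_gap_interval (e k j : ℕ) (he : 0 < e) (hk : 0 < k) (hj : 0 < j)
    (hjk : j + k ≤ e - 1) (hjle : j ≤ k) :
    ∀ x : ℕ, 2 * e + 2 * j - 1 ≤ x → x ≤ 2 * e + j + k - 1 → x ∉ sally e k j :=
  sally_gap_interval_general e k j hj hjk
end

section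
/- Let e, k be positive integers with 2k ≤ e and 4 ≤ e - k, and let j satisfy 1 ≤ j ≤ e-1-k, with (j,k) ≠ (1, e/2). Then the numerical semigroup S_k^e(j) = ⟨e,...,e+j-1, e+j+k,...,2e-1⟩ is symmetric if and only if j = k. -/
lemma interval_add (a1 b1 a2 b2 n : ℕ) (h1 : a1 ≤ b1) (h2 : a2 ≤ b2)
    (hn1 : a1 + a2 ≤ n) (hn2 : n ≤ b1 + b2) :
    ∃ x y, a1 ≤ x ∧ x ≤ b1 ∧ a2 ≤ y ∧ y ≤ b2 ∧ n = x + y :=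
  ⟨min b1 (n - a2), n - min b1 (n - a2), by omega, by omega, by omega, by omega, by omega⟩

theorem sally_symmetric_iff_j_eq_k (e k j : ℕ) (hk : 0 < k) (hke : 2 * k ≤ e)
    (hed : 4 ≤ e - k) (hj1 : 1 ≤ j) (hj2 : j ≤ e - 1 - k) (hne : ¬ (j = 1 ∧ 2 * k = e)) :
    IsSymmetricNS (sally e k j) ↔ j = k := by
  have hgenA : ∀ n, e ≤ n → n < e + j → n ∈ sally e k j := fun n h1 h2 =>
    AddSubmonoid.subset_closure (Or.inl ⟨h1, h2⟩)
  have hgenB : ∀ n, e + j + k ≤ n → n < 2 * e → n ∈ sally e k j := fun n h1 h2 =>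
    AddSubmonoid.subset_closure (Or.inr ⟨h1, h2⟩)
  have hAA : ∀ n, 2*e ≤ n → n ≤ 2*e + 2*j - 2 → n ∈ sally e k j := by
    intro n h1 h2
    obtain ⟨x, y, hx1, hx2, hy1, hy2, rfl⟩ :=
      interval_add e (e+j-1) e (e+j-1) n (by omega) (by omega) (by omega) (by omega)
    exact add_mem (hgenA x hx1 (by omega)) (hgenA y hy1 (by omega))
  have hband : ∀ n, 2*e+j+k ≤ n → n ≤ 3*e+j+k-1 → n ∈ sally e k j := by
    intro n h1 h2
    rcases le_or_gt n (3*e+j-2) with h3 | h3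
    · obtain ⟨x, y, hx1, hx2, hy1, hy2, rfl⟩ :=
        interval_add e (e+j-1) (e+j+k) (2*e-1) n (by omega) (by omega) (by omega) (by omega)
      exact add_mem (hgenA x hx1 (by omega)) (hgenB y hy1 (by omega))
    · rcases le_or_gt (2*e+2*j+2*k) n with h4 | h4
      · obtain ⟨x, y, hx1, hx2, hy1, hy2, rfl⟩ :=
          interval_add (e+j+k) (2*e-1) (e+j+k) (2*e-1) n (by omega) (by omega) (by omega) (by omega)
        exact add_mem (hgenB x hx1 (by omega)) (hgenB y hy1 (by omega))
      · obtain ⟨x, y, hx1, hx2, hy1, hy2, rfl⟩ :=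
          interval_add e (e+j-1) (2*e) (2*e+2*j-2) n (by omega) (by omega) (by omega) (by omega)
        exact add_mem (hgenA x hx1 (by omega)) (hAA y hy1 (by omega))
  have htail : ∀ n, 2*e+j+k ≤ n → n ∈ sally e k j := by
    intro n
    induction n using Nat.strong_induction_on with
    | _ n ih =>
      intro h1
      rcases le_or_gt n (3*e+j+k-1) with h2 | h2
      · exact hband n h1 h2
      · have h3 : n - e ∈ sally e k j := ih (n - e) (by omega) (by omega)
        have h4 : n = e + (n - e) := by omega
        rw [h4]
        exact add_mem (hgenA e le_rfl (by omega)) h3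
  have hmem : ∀ n, n ∈ sally e k j ↔
      (n = 0 ∨ (e ≤ n ∧ n < e+j) ∨ (e+j+k ≤ n ∧ n ≤ 2*e+2*j-2) ∨ 2*e+j+k ≤ n) := by
    intro n
    constructor
    · intro hn
      have hle : sally e k j ≤
          { carrier := {m : ℕ | m = 0 ∨ (e ≤ m ∧ m < e+j) ∨ (e+j+k ≤ m ∧ m ≤ 2*e+2*j-2) ∨
              2*e+j+k ≤ m}
            zero_mem' := Or.inl rfl
            add_mem' := by
              intro a b ha hb
              simp only [Set.mem_setOf_eq] at *
              omega } := by
        rw [sally]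
        apply AddSubmonoid.closure_le.mpr
        intro x hx
        simp only [Set.mem_union, Set.mem_Ico] at hx
        show x = 0 ∨ (e ≤ x ∧ x < e+j) ∨ (e+j+k ≤ x ∧ x ≤ 2*e+2*j-2) ∨ 2*e+j+k ≤ x
        omega
      exact hle hn
    · rintro (rfl | ⟨h1, h2⟩ | ⟨h1, h2⟩ | h1)
      · exact zero_mem _
      · exact hgenA n h1 h2
      · rcases le_or_gt (2*e) n with h3 | h3
        · exact hAA n h3 h2
        · exact hgenB n h1 h3
      · exact htail n h1
  have hG : gapsOf (sally e k j) =
      ↑(Finset.Ico 1 e ∪ Finset.Ico (e+j) (e+j+k) ∪ Finset.Ico (2*e+2*j-1) (2*e+j+k)) := by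
    ext n
    simp only [gapsOf, Set.mem_setOf_eq, hmem n, Finset.coe_union, Set.mem_union,
      Finset.coe_Ico, Set.mem_Ico]
    omega
  have hgenus : genusOf (sally e k j) = (e - 1) + k + (2*e+j+k - (2*e+2*j-1)) := by
    rw [genusOf, hG, Nat.card_coe_set_eq, Set.ncard_coe_finset]
    rw [Finset.card_union_of_disjoint, Finset.card_union_of_disjoint]
    · simp only [Nat.card_Ico]
      omega
    · rw [Finset.disjoint_left]
      intro a ha hb
      simp only [Finset.mem_Ico] at ha hb
      omega
    · rw [Finset.disjoint_left]
      intro a ha hb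
      simp only [Finset.mem_union, Finset.mem_Ico] at ha hb
      omega
  have hF : frobeniusNumber (sally e k j) = (if j ≤ k then 2*e+j+k-1 else e+j+k-1) := by
    rw [frobeniusNumber, hG]
    apply le_antisymm
    · apply csSup_le
      · refine ⟨e-1, ?_⟩
        simp only [Finset.coe_union, Set.mem_union, Finset.coe_Ico, Set.mem_Ico]
        omega
      · intro x hx
        simp only [Finset.coe_union, Set.mem_union, Finset.coe_Ico, Set.mem_Ico] at hx
        split_ifs <;> omega
    · apply le_csSup
      · exact (Finset.Ico 1 e ∪ Finset.Ico (e+j) (e+j+k) ∪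
          Finset.Ico (2*e+2*j-1) (2*e+j+k)).finite_toSet.bddAbove
      · simp only [Finset.coe_union, Set.mem_union, Finset.coe_Ico, Set.mem_Ico]
        split_ifs <;> omega
  show 2 * genusOf (sally e k j) = frobeniusNumber (sally e k j) + 1 ↔ j = k
  rw [hgenus, hF]
  split_ifs with h <;> omega
end

section
/- Let e be an even positive integer with e ≥ 8 and set k = e/2, j = 1. Then the numerical semigroup S = ⟨e⟩ ∪ ⟨e + k + 1, ..., 2e-1⟩ = ⟨e, 3e/2 + 1, 3e/2 + 2, ..., 2e-1⟩ is symmetric, with Frobenius number 4e+1 and genus 2e+1. -/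
def sallyPred (m n : ℕ) : Prop :=
  n = 0 ∨ n = 2*m ∨ (3*m+1 ≤ n ∧ n ≤ 4*m) ∨ (5*m+1 ≤ n ∧ n ≤ 6*m) ∨
  (6*m+2 ≤ n ∧ n ≤ 8*m) ∨ n = 8*m+2 ∨ 8*m+3 ≤ n

lemma sally_gen_mem (m : ℕ) {x : ℕ} (hx : x = 2*m ∨ (3*m+1 ≤ x ∧ x < 4*m)) :
    x ∈ sally (2*m) m 1 := by
  apply AddSubmonoid.subset_closure
  simp only [Set.mem_union, Set.mem_Ico]
  omega

lemma sally_pair_mem (m : ℕ) (hm : 4 ≤ m) {t : ℕ} (h1 : 6*m+2 ≤ t) (h2 : t + 2 ≤ 8*m) :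
    t ∈ sally (2*m) m 1 := by
  rcases le_or_gt t (7*m) with h | h
  · have ht : t = (3*m+1) + (t - (3*m+1)) := by omega
    rw [ht]
    exact add_mem (sally_gen_mem m (Or.inr ⟨by omega, by omega⟩))
      (sally_gen_mem m (Or.inr ⟨by omega, by omega⟩))
  · have ht : t = (4*m-1) + (t - (4*m-1)) := by omega
    rw [ht]
    exact add_mem (sally_gen_mem m (Or.inr ⟨by omega, by omega⟩))
      (sally_gen_mem m (Or.inr ⟨by omega, by omega⟩))

lemma sally_pred_mem (m : ℕ) (hm : 4 ≤ m) : ∀ n, sallyPred m n → n ∈ sally (2*m) m 1 := by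
  have g2m : (2*m) ∈ sally (2*m) m 1 := sally_gen_mem m (Or.inl rfl)
  intro n
  induction n using Nat.strong_induction_on with
  | _ n ih =>
    intro hn
    rcases hn with rfl | rfl | ⟨h1, h2⟩ | ⟨h1, h2⟩ | ⟨h1, h2⟩ | rfl | h
    · exact zero_mem _
    · exact g2m
    · -- [3m+1, 4m]
      rcases lt_or_eq_of_le h2 with h | rfl
      · exact sally_gen_mem m (Or.inr ⟨h1, by omega⟩)
      · rw [show 4*m = 2*m + 2*m by ring]
        exact add_mem g2m g2m
    · -- [5m+1, 6m]
      rcases lt_or_eq_of_le h2 with h | rfl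
      · rw [show n = 2*m + (n - 2*m) by omega]
        exact add_mem g2m (sally_gen_mem m (Or.inr ⟨by omega, by omega⟩))
      · rw [show 6*m = 2*m + (2*m + 2*m) by ring]
        exact add_mem g2m (add_mem g2m g2m)
    · -- [6m+2, 8m]
      rcases le_or_gt (n+2) (8*m) with h | h
      · exact sally_pair_mem m hm h1 h
      · rcases lt_or_eq_of_le h2 with h' | rfl
        · -- n = 8m-1
          rw [show n = 2*m + (2*m + (4*m-1)) by omega]
          exact add_mem g2m (add_mem g2m (sally_gen_mem m (Or.inr ⟨by omega, by omega⟩)))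
        · rw [show 8*m = 2*m + (2*m + (2*m + 2*m)) by ring]
          exact add_mem g2m (add_mem g2m (add_mem g2m g2m))
    · -- 8m+2
      rw [show 8*m+2 = 2*m + (6*m+2) by ring]
      exact add_mem g2m (sally_pair_mem m hm (by omega) (by omega))
    · -- n ≥ 8m+3
      rcases le_or_gt (10*m+2) n with h' | h'
      · have hp : sallyPred m (n - 2*m) := by unfold sallyPred; omega
        rw [show n = 2*m + (n - 2*m) by omega]
        exact add_mem g2m (ih (n - 2*m) (by omega) hp)
      · rcases le_or_gt (n + 2) (10*m) with h'' | h''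
        · rw [show n = 2*m + (n - 2*m) by omega]
          exact add_mem g2m (sally_pair_mem m hm (by omega) (by omega))
        · -- n ∈ [10m-1, 10m+1]
          rw [show n = (3*m+1) + (n - (3*m+1)) by omega]
          exact add_mem (sally_gen_mem m (Or.inr ⟨by omega, by omega⟩))
            (sally_pair_mem m hm (by omega) (by omega))

lemma sally_mem_iff (m : ℕ) (hm : 4 ≤ m) (n : ℕ) :
    n ∈ sally (2*m) m 1 ↔ sallyPred m n := by
  constructor
  · intro hn
    let P : AddSubmonoid ℕ :=
      { carrier := {n | sallyPred m n}
        zero_mem' := Or.inl rfl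
        add_mem' := by
          intro a b ha hb
          simp only [Set.mem_setOf_eq, sallyPred] at *
          omega }
    have hle : sally (2*m) m 1 ≤ P := by
      apply AddSubmonoid.closure_le.mpr
      intro x hx
      simp only [Set.mem_union, Set.mem_Ico] at hx
      show sallyPred m x
      unfold sallyPred
      omega
    exact hle hn
  · exact sally_pred_mem m hm n

theorem sally_half_symmetric (e : ℕ) (he : 8 ≤ e) (hev : 2 ∣ e) :
    IsSymmetricNS (sally e (e / 2) 1) ∧
    frobeniusNumber (sally e (e / 2) 1) = 4 * e + 1 ∧
    genusOf (sally e (e / 2) 1) = 2 * e + 1 := by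
  obtain ⟨m, rfl⟩ := hev
  have hm : 4 ≤ m := by omega
  have hdiv : 2 * m / 2 = m := by omega
  rw [hdiv]
  set F : Finset ℕ := Finset.Ico 1 (2*m) ∪ Finset.Ico (2*m+1) (3*m+1) ∪
    Finset.Ico (4*m+1) (5*m+1) ∪ {6*m+1} ∪ {8*m+1} with hF
  have hmemF : ∀ n, n ∈ F ↔ ¬ sallyPred m n := by
    intro n
    simp only [hF, Finset.mem_union, Finset.mem_Ico, Finset.mem_singleton, sallyPred]
    omega
  have hgaps : gapsOf (sally (2*m) m 1) = ↑F := by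
    ext n
    simp only [gapsOf, Set.mem_setOf_eq, sally_mem_iff m hm, Finset.mem_coe]
    exact (hmemF n).symm
  have hub : ∀ x ∈ (↑F : Set ℕ), x ≤ 8*m+1 := by
    intro x hx
    rw [Finset.mem_coe, hmemF] at hx
    by_contra h
    exact hx (by unfold sallyPred; omega)
  have hmem81 : (8*m+1 : ℕ) ∈ (↑F : Set ℕ) := by
    rw [Finset.mem_coe, hmemF]
    unfold sallyPred; omega
  have hfrob : frobeniusNumber (sally (2*m) m 1) = 8*m+1 := by
    rw [frobeniusNumber, hgaps]
    exact le_antisymm (csSup_le ⟨_, hmem81⟩ hub) (le_csSup ⟨8*m+1, fun x hx => hub x hx⟩ hmem81)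
  have hcard : F.card = 4*m+1 := by
    rw [hF]
    rw [Finset.card_union_of_disjoint (by
      rw [Finset.disjoint_left]; intro a ha hb
      simp only [Finset.mem_union, Finset.mem_Ico, Finset.mem_singleton] at *; omega)]
    rw [Finset.card_union_of_disjoint (by
      rw [Finset.disjoint_left]; intro a ha hb
      simp only [Finset.mem_union, Finset.mem_Ico, Finset.mem_singleton] at *; omega)]
    rw [Finset.card_union_of_disjoint (by
      rw [Finset.disjoint_left]; intro a ha hb
      simp only [Finset.mem_union, Finset.mem_Ico, Finset.mem_singleton] at *; omega)]
    rw [Finset.card_union_of_disjoint (by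
      rw [Finset.disjoint_left]; intro a ha hb
      simp only [Finset.mem_Ico, Finset.mem_singleton] at *; omega)]
    simp only [Nat.card_Ico, Finset.card_singleton]
    omega
  have hgenus : genusOf (sally (2*m) m 1) = 4*m+1 := by
    rw [genusOf, hgaps, Nat.card_coe_set_eq, Set.ncard_coe_finset, hcard]
  refine ⟨?_, ?_, ?_⟩
  · rw [IsSymmetricNS, hgenus, hfrob]; ring
  · rw [hfrob]; ring
  · rw [hgenus]; ring
end

section
/- Let e, k satisfy 2k ≤ e and e - k ≥ 4, and let R = k[X_i : i ∈ [0,e-1] \ [k,2k-1]] with the grading deg X_i = e + i, where we interpret X_{e+2t} = X_t² and X_{e+2t+1} = X_t X_{t+1}. Then the defining ideal I_k of the semigroup ring k[S_k], S_k = ⟨e,...,e+k-1, e+2k,...,2e-1⟩, equals I₂(A) + I₂(B), where A is the 2×(e-k-1) matrix with rows (X_0,...,X_{k-2}, X_{2k},...,X_{e-1}) and (X_1,...,X_{k-1}, X_{2k+1},...,X_0²), and B is the 2×(e-k-2) matrix with rows (X_{k-1}, X_{2k},...,X_{e+k-3}) and (X_{2k}, X_{3k+1},...,X_{k-1}²).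 -/
/-!
Every minor of `A` or `B` is a difference of two monomials of the same degree, so
`J = I₂(A) + I₂(B)` lies in `I_k`. Conversely, the kernel of a monomial map is spanned by the
differences of monomials of equal degree, so it suffices to show, by induction on the degree `d`,
that monomials of equal degree are congruent modulo `J`.

The minors of `A` make `X_x X_y` depend only on `x + y` along each run of consecutive columns, and
the minors of `B` trade `X_{k-1} X_{c+k+1}` for `X_c X_{2k}`. With these moves every monomial of
degree at least `2e` is congruent to a multiple of `X_0`, except the low pairs `X_a X_b` with
`a, b < k ≤ a + b ≤ 2k - 2`, the high pairs with `a + b = e + 2k - 1` and the low triples with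
`a + b + c = 2k - 1`: the monomials whose degree minus `e` is a gap of `S_k`. As `J ⊆ I_k`,
congruences modulo `J` preserve degrees, so an exceptional monomial is never congruent to a
multiple of `X_0`; two multiples of `X_0` are compared by induction, and exceptional monomials of
equal degree are congruent directly.
-/

open MvPolynomial

noncomputable section

/-- The index set of variables: `[0, e-1] \ [k, 2k-1]`. -/
def SallyVar (e k : ℕ) : Type := {i : ℕ // i < e ∧ (i < k ∨ 2 * k ≤ i)}

/-- The variable `X i` for `i` in the index set, and `0` otherwise. -/
def Xv (K : Type) [Field K] (e k : ℕ) (i : ℕ) : MvPolynomial (SallyVar e k) K :=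
  if h : i < e ∧ (i < k ∨ 2 * k ≤ i) then X (⟨i, h⟩ : SallyVar e k) else 0

/-- The extended symbols: `Xb i = X i` for `i < e`, while for `i ≥ e` we interpret
`X_{e+2t} = X_t ^ 2` and `X_{e+2t+1} = X_t * X_{t+1}`. -/
def Xb (K : Type) [Field K] (e k : ℕ) (i : ℕ) : MvPolynomial (SallyVar e k) K :=
  if i < e then Xv K e k i
  else if (i - e) % 2 = 0 then (Xv K e k ((i - e) / 2)) ^ 2
  else Xv K e k ((i - e) / 2) * Xv K e k ((i - e) / 2 + 1)

/-- The defining ideal `I_k` of the semigroup ring `K[S_k]`,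
`S_k = ⟨e,…,e+k-1, e+2k,…,2e-1⟩`: the kernel of `X i ↦ T ^ (e + i)`. -/
def sallyIdeal (K : Type) [Field K] (e k : ℕ) : Ideal (MvPolynomial (SallyVar e k) K) :=
  RingHom.ker (aeval fun v : SallyVar e k =>
    (Polynomial.X : Polynomial K) ^ (e + v.1)).toRingHom

/-- The column indices of the matrix `A^e_k`: `{0,…,k-2} ∪ {2k,…,e-1}`; the column
at index `c` is `(Xb c, Xb (c+1))`, so the rows of `A^e_k` are
`(X_0,…,X_{k-2},X_{2k},…,X_{e-1})` and `(X_1,…,X_{k-1},X_{2k+1},…,X_0²)`. -/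
def colsA (e k : ℕ) : Set ℕ := {c | c < e ∧ (c + 1 < k ∨ 2 * k ≤ c)}

/-- The `2 × 2` minors of `A^e_k`. -/
def minorsA (K : Type) [Field K] (e k : ℕ) : Set (MvPolynomial (SallyVar e k) K) :=
  {p | ∃ c₁ ∈ colsA e k, ∃ c₂ ∈ colsA e k,
    p = Xb K e k c₁ * Xb K e k (c₂ + 1) - Xb K e k c₂ * Xb K e k (c₁ + 1)}

/-- The columns of the matrix `B^e_k`, as pairs (top entry, bottom entry): the first
column is `(X_{k-1}, X_{2k})` and for `2k ≤ c ≤ e+k-3` there is a column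
`(X_c, X_{c+k+1})`; so the rows of `B^e_k` are `(X_{k-1}, X_{2k},…,X_{e+k-3})` and
`(X_{2k}, X_{3k+1},…,X_{k-1}²)`. -/
def colsB (K : Type) [Field K] (e k : ℕ) :
    Set (MvPolynomial (SallyVar e k) K × MvPolynomial (SallyVar e k) K) :=
  insert (Xb K e k (k - 1), Xb K e k (2 * k))
    {p | ∃ c, 2 * k ≤ c ∧ c ≤ e + k - 3 ∧ p = (Xb K e k c, Xb K e k (c + k + 1))}

/-- The `2 × 2` minors of `B^e_k`. -/
def minorsB (K : Type) [Field K] (e k : ℕ) : Set (MvPolynomial (SallyVar e k) K) :=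
  {p | ∃ q₁ ∈ colsB K e k, ∃ q₂ ∈ colsB K e k, p = q₁.1 * q₂.2 - q₂.1 * q₁.2}

section MonomialKernel

variable {σ R : Type*} [CommRing R]

theorem aeval_X_pow_monomial (w : σ → ℕ) (d : σ →₀ ℕ) (c : R) :
    aeval (fun s => (Polynomial.X : Polynomial R) ^ w s) (monomial d c) =
      Polynomial.monomial (Finsupp.weight w d) c := by
  rw [aeval_monomial, Finsupp.weight_apply, Finsupp.sum, ← Polynomial.C_mul_X_pow_eq_monomial,
    ← Finset.prod_pow_eq_pow_sum]
  simp [Finsupp.prod, ← pow_mul, mul_comm]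

theorem ker_aeval_X_pow_le (w : σ → ℕ) {J : Ideal (MvPolynomial σ R)}
    (hJ : ∀ d d' : σ →₀ ℕ, Finsupp.weight w d = Finsupp.weight w d' →
      monomial d (1 : R) - monomial d' 1 ∈ J) :
    RingHom.ker (aeval fun s => (Polynomial.X : Polynomial R) ^ w s) ≤ J := by
  -- `ψ` sends `X ^ n` back to a fixed monomial of weight `n`, so `f - ψ (φ f) ∈ J` for all `f`
  let rep := Function.invFun (Finsupp.weight w : (σ →₀ ℕ) → ℕ)
  let ψ : Polynomial R →ₗ[R] MvPolynomial σ R := Polynomial.lsum fun n => monomial (rep n)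
  have hψ : ∀ f, f - ψ (aeval (fun s => Polynomial.X ^ w s) f) ∈ J := by
    intro f
    induction f using MvPolynomial.induction_on' with
    | monomial d c =>
      have hrep : Finsupp.weight w d = Finsupp.weight w (rep (Finsupp.weight w d)) :=
        (Function.invFun_eq ⟨d, rfl⟩).symm
      have := J.mul_mem_left (C c) (hJ _ _ hrep)
      simpa [aeval_X_pow_monomial, ψ, mul_sub, C_mul_monomial] using this
    | add p q hp hq => simpa [add_sub_add_comm] using J.add_mem hp hq
  intro f hf
  simpa [RingHom.mem_ker.1 hf] using hψ f

end MonomialKernel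

theorem Multiset.eq_zero_or_eq_singleton_of_card_le_one {α : Type*} {m : Multiset α}
    (h : Multiset.card m ≤ 1) : m = 0 ∨ ∃ a, m = {a} := by
  interval_cases hm : Multiset.card m
  exacts [Or.inl (Multiset.card_eq_zero.1 hm), Or.inr (Multiset.card_eq_one.1 hm)]

namespace Sally

variable {K : Type} [Field K] {e k : ℕ}

def minorIdeal (K : Type) [Field K] (e k : ℕ) : Ideal (MvPolynomial (SallyVar e k) K) :=
  Ideal.span (minorsA K e k) ⊔ Ideal.span (minorsB K e k)

local notation:50 p " ≡ " q => SModEq (minorIdeal K e k) p q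

def Xm (K : Type) [Field K] (e k : ℕ) (m : Multiset ℕ) : MvPolynomial (SallyVar e k) K :=
  (m.map (Xv K e k)).prod

@[simp] lemma Xm_zero : Xm K e k 0 = 1 := rfl

@[simp] lemma Xm_cons (i : ℕ) (m : Multiset ℕ) :
    Xm K e k (i ::ₘ m) = Xv K e k i * Xm K e k m := by
  simp [Xm]

@[simp] lemma Xm_add (m n : Multiset ℕ) : Xm K e k (m + n) = Xm K e k m * Xm K e k n := by
  simp [Xm]

@[simp] lemma Xm_singleton (i : ℕ) : Xm K e k {i} = Xv K e k i := by
  simp [Xm]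

/-- The degree of `Xm m`, for the grading `deg X_i = e + i`. -/
def deg (e : ℕ) (m : Multiset ℕ) : ℕ := e * Multiset.card m + m.sum

@[simp] lemma deg_zero : deg e 0 = 0 := by simp [deg]

@[simp] lemma deg_cons (i : ℕ) (m : Multiset ℕ) : deg e (i ::ₘ m) = e + i + deg e m := by
  simp [deg]; ring

@[simp] lemma deg_add (m n : Multiset ℕ) : deg e (m + n) = deg e m + deg e n := by
  simp [deg]; ring

def Valid (e k : ℕ) (m : Multiset ℕ) : Prop := ∀ i ∈ m, i < e ∧ (i < k ∨ 2 * k ≤ i)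

lemma Valid.add {m n : Multiset ℕ} (hm : Valid e k m) (hn : Valid e k n) : Valid e k (m + n) := by
  intro i hi
  rcases Multiset.mem_add.1 hi with hi | hi
  exacts [hm i hi, hn i hi]

lemma Valid.of_le {m n : Multiset ℕ} (hn : Valid e k n) (h : m ≤ n) : Valid e k m :=
  fun i hi => hn i (Multiset.mem_of_le h hi)

def bal (u : ℕ) : Multiset ℕ := {u / 2, u - u / 2}

def xb (e i : ℕ) : Multiset ℕ := if i < e then {i} else bal (i - e)

lemma Xb_eq_Xm (i : ℕ) : Xb K e k i = Xm K e k (xb e i) := by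
  unfold Xb xb bal
  split_ifs with h h'
  · simp
  · simp [sq, show i - e - (i - e) / 2 = (i - e) / 2 by omega]
  · simp [show i - e - (i - e) / 2 = (i - e) / 2 + 1 by omega]

lemma xb_of_lt {i : ℕ} (h : i < e) : xb e i = {i} := if_pos h

lemma xb_of_le {i : ℕ} (h : e ≤ i) : xb e i = bal (i - e) := if_neg (by omega)

@[simp] lemma deg_xb (i : ℕ) : deg e (xb e i) = e + i := by
  unfold xb bal
  split_ifs <;> simp [deg]; omega

lemma valid_xb (h2k : 2 * k ≤ e) {i : ℕ} (hi : i < k ∨ 2 * k ≤ i)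
    (hie : i + 2 ≤ e + 2 * k) :
    Valid e k (xb e i) := by
  unfold xb bal
  split_ifs with h
  · simpa [Valid] using ⟨h, hi⟩
  · simp only [Valid, Multiset.insert_eq_cons, Multiset.mem_cons, Multiset.mem_singleton]
    omega

def phi (K : Type) [Field K] (e k : ℕ) : MvPolynomial (SallyVar e k) K →ₐ[K] Polynomial K :=
  aeval fun v : SallyVar e k => Polynomial.X ^ (e + v.1)

lemma phi_Xm {m : Multiset ℕ} (hm : Valid e k m) :
    phi K e k (Xm K e k m) = Polynomial.X ^ deg e m := by
  induction m using Multiset.induction with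
  | empty => simp
  | cons i m ih =>
    have hi := hm i (Multiset.mem_cons_self i m)
    have hX : phi K e k (Xv K e k i) = Polynomial.X ^ (e + i) := by
      rw [Xv, dif_pos hi]
      exact aeval_X _ _
    rw [Xm_cons, map_mul, hX, ih fun j hj => hm j (Multiset.mem_cons_of_mem hj), deg_cons,
      ← pow_add]

lemma phi_Xb (h2k : 2 * k ≤ e) {i : ℕ} (hi : i < k ∨ 2 * k ≤ i)
    (hie : i + 2 ≤ e + 2 * k) :
    phi K e k (Xb K e k i) = Polynomial.X ^ (e + i) := by
  rw [Xb_eq_Xm, phi_Xm (valid_xb h2k hi hie), deg_xb]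

lemma minorIdeal_le_ker (hk : 0 < k) (h2k : 2 * k ≤ e) :
    minorIdeal K e k ≤ RingHom.ker (phi K e k) := by
  refine sup_le (Ideal.span_le.2 ?_) (Ideal.span_le.2 ?_)
  · rintro _ ⟨c₁, ⟨hc₁, hc₁'⟩, c₂, ⟨hc₂, hc₂'⟩, rfl⟩
    simp only [SetLike.mem_coe, RingHom.mem_ker, map_sub, map_mul]
    rw [phi_Xb h2k (by omega) (by omega), phi_Xb h2k (by omega) (by omega),
      phi_Xb h2k (by omega) (by omega), phi_Xb h2k (by omega) (by omega), ← pow_add, ← pow_add,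
      show e + c₁ + (e + (c₂ + 1)) = e + c₂ + (e + (c₁ + 1)) by omega, sub_self]
  · have hcol : ∀ q ∈ colsB K e k, ∃ a, phi K e k q.1 = Polynomial.X ^ a ∧
        phi K e k q.2 = Polynomial.X ^ (a + (k + 1)) := by
      rintro q (rfl | ⟨c, hc, hc', rfl⟩)
      · exact ⟨e + (k - 1), phi_Xb h2k (by omega) (by omega),
          by rw [phi_Xb h2k (by omega) (by omega)]; congr 1; omega⟩
      · exact ⟨e + c, phi_Xb h2k (by omega) (by omega),
          by rw [phi_Xb h2k (by omega) (by omega)]; congr 1; omega⟩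
    rintro _ ⟨q₁, hq₁, q₂, hq₂, rfl⟩
    obtain ⟨a₁, h₁, h₁'⟩ := hcol q₁ hq₁
    obtain ⟨a₂, h₂, h₂'⟩ := hcol q₂ hq₂
    simp only [SetLike.mem_coe, RingHom.mem_ker, map_sub, map_mul, h₁, h₁', h₂, h₂',
      ← pow_add]
    rw [show a₁ + (a₂ + (k + 1)) = a₂ + (a₁ + (k + 1)) by omega, sub_self]

lemma deg_eq_of_smodEq (hk : 0 < k) (h2k : 2 * k ≤ e) {m n : Multiset ℕ} (hm : Valid e k m)
    (hn : Valid e k n) (h : Xm K e k m ≡ Xm K e k n) : deg e m = deg e n := by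
  have := minorIdeal_le_ker hk h2k (SModEq.sub_mem.1 h)
  rw [RingHom.mem_ker, map_sub, sub_eq_zero, phi_Xm hm, phi_Xm hn] at this
  simpa using congrArg Polynomial.natDegree this

lemma Xb_of_lt {i : ℕ} (h : i < e) : Xb K e k i = Xv K e k i := by
  rw [Xb_eq_Xm, xb_of_lt h, Xm_singleton]

lemma smodEq_of_mem_colsA {a b : ℕ} (ha : a ∈ colsA e k) (hb : b ∈ colsA e k) :
    Xb K e k a * Xb K e k (b + 1) ≡ Xb K e k b * Xb K e k (a + 1) :=
  SModEq.sub_mem.2 (Ideal.mem_sup_left (Ideal.subset_span ⟨a, ha, b, hb, rfl⟩))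

lemma smodEq_of_colsB {c : ℕ} (hc : 2 * k ≤ c) (hc' : c ≤ e + k - 3) :
    Xb K e k (k - 1) * Xb K e k (c + k + 1) ≡ Xb K e k c * Xb K e k (2 * k) :=
  SModEq.sub_mem.2 (Ideal.mem_sup_right (Ideal.subset_span
    ⟨_, Set.mem_insert _ _, _, Set.mem_insert_of_mem _ ⟨c, hc, hc', rfl⟩, rfl⟩))

lemma Xb_mul_Xb_shift (n : ℕ) {x y : ℕ} (hx : ∀ i < n, x + i ∈ colsA e k)
    (hy : ∀ i < n, y + i ∈ colsA e k) :
    Xb K e k x * Xb K e k (y + n) ≡ Xb K e k (x + n) * Xb K e k y := by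
  induction n generalizing x with
  | zero => exact SModEq.refl _
  | succ n ih =>
    calc Xb K e k x * Xb K e k (y + n + 1)
        ≡ Xb K e k (y + n) * Xb K e k (x + 1) :=
          smodEq_of_mem_colsA (hx 0 n.succ_pos) (hy n n.lt_succ_self)
      _ = Xb K e k (x + 1) * Xb K e k (y + n) := mul_comm _ _
      _ ≡ Xb K e k (x + 1 + n) * Xb K e k y :=
          ih (fun i hi => by simpa [add_assoc, add_comm 1 i] using hx (i + 1) (by omega))
            fun i hi => hy i (by omega)
      _ = Xb K e k (x + (n + 1)) * Xb K e k y := by rw [add_right_comm, add_assoc]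

lemma Xb_mul_Xb_smodEq {l u : ℕ} (hrun : ∀ c, l ≤ c → c < u → c ∈ colsA e k)
    {x y x' y' : ℕ} (hx : l ≤ x ∧ x ≤ u) (hy : l ≤ y ∧ y ≤ u)
    (hx' : l ≤ x' ∧ x' ≤ u) (hy' : l ≤ y' ∧ y' ≤ u) (hs : x + y = x' + y') :
    Xb K e k x * Xb K e k y ≡ Xb K e k x' * Xb K e k y' := by
  wlog h : x ≤ x' generalizing x y x' y'
  · exact (this hx' hy' hx hy hs.symm (by omega)).symm
  obtain ⟨n, rfl⟩ := Nat.exists_eq_add_of_le h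
  obtain rfl : y = y' + n := by omega
  exact Xb_mul_Xb_shift n (fun i _ => hrun _ (by omega) (by omega))
    fun i _ => hrun _ (by omega) (by omega)

lemma Xb_mul_Xb_smodEq_high {x y x' y' : ℕ} (hx : 2 * k ≤ x ∧ x ≤ e)
    (hy : 2 * k ≤ y ∧ y ≤ e) (hx' : 2 * k ≤ x' ∧ x' ≤ e)
    (hy' : 2 * k ≤ y' ∧ y' ≤ e) (hs : x + y = x' + y') :
    Xb K e k x * Xb K e k y ≡ Xb K e k x' * Xb K e k y' :=
  Xb_mul_Xb_smodEq (fun _ hc hce => ⟨hce, Or.inr hc⟩) hx hy hx' hy' hs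

lemma Xv_mul_Xv_smodEq_low (hke : k ≤ e) {x y x' y' : ℕ} (hx : x < k) (hy : y < k)
    (hx' : x' < k) (hy' : y' < k) (hs : x + y = x' + y') :
    Xv K e k x * Xv K e k y ≡ Xv K e k x' * Xv K e k y' := by
  have h := Xb_mul_Xb_smodEq (K := K) (e := e) (k := k) (l := 0) (u := k - 1)
    (fun _ _ hc => ⟨by omega, Or.inl (by omega)⟩) (x := x) (y := y) (x' := x') (y' := y')
    (by omega) (by omega) (by omega) (by omega) hs
  rwa [Xb_of_lt (by omega), Xb_of_lt (by omega), Xb_of_lt (by omega), Xb_of_lt (by omega)] at h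

lemma exists_smodEq_cons_min (hke : k ≤ e) {m : Multiset ℕ} (hm : ∀ i ∈ m, i < k)
    (h0 : m ≠ 0) :
    ∃ m', (∀ i ∈ m', i < k) ∧ Multiset.card m' + 1 = Multiset.card m ∧
      m'.sum + min (k - 1) m.sum = m.sum ∧
      Xm K e k m ≡ Xm K e k (min (k - 1) m.sum ::ₘ m') := by
  induction m using Multiset.induction with
  | empty => exact absurd rfl h0
  | cons a r ih =>
    have ha := hm a (Multiset.mem_cons_self a r)
    have hr : ∀ i ∈ r, i < k := fun i hi => hm i (Multiset.mem_cons_of_mem hi)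
    rcases eq_or_ne r 0 with rfl | hr0
    · have hmin : min (k - 1) (a ::ₘ 0).sum = a := by simp; omega
      exact ⟨0, by simp, by simp, by simp; omega, by rw [hmin]⟩
    obtain ⟨r', hr', hcard, hsum, hcong⟩ := ih hr hr0
    have hmin : min (k - 1) (a ::ₘ r).sum = min (k - 1) (a + min (k - 1) r.sum) := by simp; omega
    set c := min (k - 1) r.sum
    set c' := min (k - 1) (a + c)
    refine ⟨(a + c - c') ::ₘ r', ?_, by simp [hcard], by simp; omega, ?_⟩
    · intro i hi
      rcases Multiset.mem_cons.1 hi with rfl | hi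
      exacts [by omega, hr' i hi]
    rw [hmin]
    calc Xm K e k (a ::ₘ r) = Xv K e k a * Xm K e k r := Xm_cons a r
      _ ≡ Xv K e k a * Xm K e k (c ::ₘ r') := (SModEq.refl _).mul hcong
      _ = Xv K e k a * Xv K e k c * Xm K e k r' := by rw [Xm_cons, mul_assoc]
      _ ≡ Xv K e k c' * Xv K e k (a + c - c') * Xm K e k r' :=
          (Xv_mul_Xv_smodEq_low hke ha (by omega) (by omega) (by omega) (by omega)).mul
            (SModEq.refl _)
      _ = Xm K e k (c' ::ₘ (a + c - c') ::ₘ r') := by rw [Xm_cons, Xm_cons, mul_assoc]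

lemma Xm_smodEq_of_low (hke : k ≤ e) {m n : Multiset ℕ} (hm : ∀ i ∈ m, i < k)
    (hn : ∀ i ∈ n, i < k) (hc : Multiset.card m = Multiset.card n) (hs : m.sum = n.sum) :
    Xm K e k m ≡ Xm K e k n := by
  obtain ⟨N, hN⟩ : ∃ N, Multiset.card m = N := ⟨_, rfl⟩
  induction N generalizing m n with
  | zero => rw [Multiset.card_eq_zero.1 hN, Multiset.card_eq_zero.1 (hc.symm.trans hN)]
  | succ N ih =>
    have hm0 : m ≠ 0 := fun h => by simp [h] at hN
    have hn0 : n ≠ 0 := fun h => by rw [h, Multiset.card_zero] at hc; omega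
    obtain ⟨m', hm', hcm, hsm, hmm'⟩ := exists_smodEq_cons_min (K := K) hke hm hm0
    obtain ⟨n', hn', hcn, hsn, hnn'⟩ := exists_smodEq_cons_min (K := K) hke hn hn0
    rw [hs] at hmm' hsm
    calc Xm K e k m ≡ Xm K e k (min (k - 1) n.sum ::ₘ m') := hmm'
      _ ≡ Xm K e k (min (k - 1) n.sum ::ₘ n') := by
          simpa using (SModEq.refl _).mul (ih hm' hn' (by omega) (by omega) (by omega))
      _ ≡ Xm K e k n := hnn'.symm

lemma exists_low_of_sum_le (hk : 0 < k) :
    ∀ t s : ℕ, s ≤ t * (k - 1) → ∃ r : Multiset ℕ,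
      Multiset.card r = t ∧ r.sum = s ∧ ∀ i ∈ r, i < k := by
  intro t
  induction t with
  | zero => intro s hs; exact ⟨0, rfl, by simp at hs; simp [hs], by simp⟩
  | succ t ih =>
    intro s hs
    obtain ⟨r, hr, hrs, hrk⟩ := ih (s - min (k - 1) s) (by rw [Nat.succ_mul] at hs; omega)
    refine ⟨min (k - 1) s ::ₘ r, by simp [hr], by simp [hrs], ?_⟩
    intro i hi
    rcases Multiset.mem_cons.1 hi with rfl | hi
    exacts [by omega, hrk i hi]

def Absorbs (K : Type) [Field K] (e k : ℕ) (m : Multiset ℕ) : Prop :=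
  ∃ m', Valid e k m' ∧ Xm K e k m ≡ Xm K e k (0 ::ₘ m') [SMOD minorIdeal K e k]

lemma absorbs_of_zero_mem {m : Multiset ℕ} (hm : Valid e k m) (h0 : 0 ∈ m) :
    Absorbs K e k m := by
  obtain ⟨m', rfl⟩ := Multiset.exists_cons_of_mem h0
  exact ⟨m', hm.of_le (Multiset.le_cons_self _ _), SModEq.refl _⟩

lemma Absorbs.of_smodEq {m n : Multiset ℕ} (hn : Absorbs K e k n)
    (h : Xm K e k m ≡ Xm K e k n) :
    Absorbs K e k m :=
  let ⟨n', hn', h'⟩ := hn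
  ⟨n', hn', h.trans h'⟩

lemma Absorbs.of_le {m n : Multiset ℕ} (hm : Absorbs K e k m) (hle : m ≤ n) (hn : Valid e k n) :
    Absorbs K e k n := by
  obtain ⟨r, rfl⟩ := Multiset.le_iff_exists_add.1 hle
  obtain ⟨m', hm', h⟩ := hm
  refine ⟨m' + r, hm'.add (hn.of_le (Multiset.le_add_left _ _)), ?_⟩
  simpa [mul_assoc] using h.mul (SModEq.refl (Xm K e k r))

lemma absorbs_low_high (h2k : 2 * k ≤ e) {i j : ℕ} (hi : i < k) (hj : 2 * k ≤ j)
    (hje : j < e) :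
    Absorbs K e k {i, j} := by
  -- move `X_i X_j` to `X_{i-n} X_{j+n}`; either `i - n = 0` or `j + n = e`, and `X_e = X_0 ^ 2`
  set n := min i (e - j)
  have h := Xb_mul_Xb_shift (K := K) (e := e) (k := k) n (x := j) (y := i - n)
    (fun t _ => ⟨by omega, Or.inr (by omega)⟩) fun t _ => ⟨by omega, Or.inl (by omega)⟩
  rw [Nat.sub_add_cancel (min_le_left _ _), Xb_of_lt hje, Xb_of_lt (by omega), Xb_eq_Xm (j + n),
    Xb_eq_Xm (i - n), ← Xm_add, mul_comm] at h
  refine (absorbs_of_zero_mem ((valid_xb (i := j + n) h2k (by omega) (by omega)).add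
    (valid_xb (i := i - n) h2k (by omega) (by omega))) ?_).of_smodEq (by simpa using h)
  rcases eq_or_ne n i with hn | hn
  · simp [hn, xb_of_lt (show 0 < e by omega)]
  · simp [show j + n = e by omega, xb, bal]

lemma absorbs_of_mem_low_high (h2k : 2 * k ≤ e) {m : Multiset ℕ} (hm : Valid e k m) {i j : ℕ}
    (hi : i ∈ m) (hj : j ∈ m) (hik : i < k) (hjk : 2 * k ≤ j) : Absorbs K e k m := by
  obtain ⟨r, rfl⟩ := Multiset.exists_cons_of_mem hi
  have hjr : j ∈ r := (Multiset.mem_cons.1 hj).resolve_left (by omega)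
  exact (absorbs_low_high h2k hik hjk (hm j hj).1).of_le
    (Multiset.cons_le_cons i (Multiset.singleton_le.2 hjr)) hm

lemma absorbs_of_low_of_sum_le (hk : 0 < k) (hke : k ≤ e) {m : Multiset ℕ}
    (hm : ∀ i ∈ m, i < k) (h0 : m ≠ 0) (hs : m.sum ≤ (Multiset.card m - 1) * (k - 1)) :
    Absorbs K e k m := by
  obtain ⟨r, hr, hrs, hrk⟩ := exists_low_of_sum_le hk _ _ hs
  have hcard : 0 < Multiset.card m := Multiset.card_pos.2 h0
  have hv : Valid e k (0 ::ₘ r) := by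
    intro i hi
    rcases Multiset.mem_cons.1 hi with rfl | hi
    exacts [⟨by omega, Or.inl hk⟩, ⟨by have := hrk i hi; omega, Or.inl (hrk i hi)⟩]
  refine (absorbs_of_zero_mem hv (Multiset.mem_cons_self 0 r)).of_smodEq
    (Xm_smodEq_of_low hke hm ?_ (by simp; omega) (by simp [hrs]))
  intro i hi
  rcases Multiset.mem_cons.1 hi with rfl | hi
  exacts [hk, hrk i hi]

def LowPair (k : ℕ) (m : Multiset ℕ) : Prop :=
  Multiset.card m = 2 ∧ (∀ i ∈ m, i < k) ∧ k ≤ m.sum ∧ m.sum + 2 ≤ 2 * k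

def HighPair (e k : ℕ) (m : Multiset ℕ) : Prop :=
  Multiset.card m = 2 ∧ (∀ i ∈ m, 2 * k ≤ i ∧ i < e) ∧ m.sum + 1 = e + 2 * k

def LowTriple (k : ℕ) (m : Multiset ℕ) : Prop :=
  Multiset.card m = 3 ∧ (∀ i ∈ m, i < k) ∧ m.sum + 1 = 2 * k

def Exceptional (e k : ℕ) (m : Multiset ℕ) : Prop :=
  LowPair k m ∨ HighPair e k m ∨ LowTriple k m

lemma HighPair.smodEq {m n : Multiset ℕ} (hm : HighPair e k m) (hn : HighPair e k n) :
    Xm K e k m ≡ Xm K e k n := by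
  obtain ⟨x, y, rfl⟩ := Multiset.card_eq_two.1 hm.1
  obtain ⟨x', y', rfl⟩ := Multiset.card_eq_two.1 hn.1
  have hx := hm.2.1 x (by simp)
  have hy := hm.2.1 y (by simp)
  have hx' := hn.2.1 x' (by simp)
  have hy' := hn.2.1 y' (by simp)
  have hs := hm.2.2.trans hn.2.2.symm
  simp only [Multiset.insert_eq_cons, Multiset.sum_cons, Multiset.sum_singleton] at hs
  have h := Xb_mul_Xb_smodEq_high (K := K) (e := e) (k := k) (x := x) (y := y) (x' := x') (y' := y')
    (by omega) (by omega) (by omega) (by omega) (by omega)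
  rw [Xb_of_lt hx.2, Xb_of_lt hy.2, Xb_of_lt hx'.2, Xb_of_lt hy'.2] at h
  simpa using h

lemma HighPair.smodEq_bal (hk2 : 2 ≤ k) {m : Multiset ℕ} (hm : HighPair e k m) :
    Xm K e k m ≡ Xm K e k ((k - 1) ::ₘ bal k) := by
  obtain ⟨x, y, rfl⟩ := Multiset.card_eq_two.1 hm.1
  have hx := hm.2.1 x (by simp)
  have hy := hm.2.1 y (by simp)
  have hs := hm.2.2
  simp only [Multiset.insert_eq_cons, Multiset.sum_cons, Multiset.sum_singleton] at hs
  calc Xm K e k {x, y} = Xb K e k x * Xb K e k y := by simp [Xb_of_lt hx.2, Xb_of_lt hy.2]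
    _ ≡ Xb K e k (e - 1) * Xb K e k (2 * k) :=
        Xb_mul_Xb_smodEq_high (by omega) (by omega) (by omega) (by omega) (by omega)
    _ ≡ Xb K e k (k - 1) * Xb K e k (e - 1 + k + 1) :=
        (smodEq_of_colsB (by omega) (by omega)).symm
    _ = Xm K e k ((k - 1) ::ₘ bal k) := by
        rw [Xb_of_lt (by omega), Xb_eq_Xm, xb_of_le (by omega), show e - 1 + k + 1 - e = k by omega,
          Xm_cons]

lemma LowTriple.two_le {m : Multiset ℕ} (hm : LowTriple k m) : 2 ≤ k := by
  have := Multiset.sum_le_card_nsmul m (k - 1) fun i hi => by have := hm.2.1 i hi; omega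
  rw [hm.1, smul_eq_mul] at this
  have := hm.2.2
  omega

lemma LowTriple.smodEq_bal (hke : k ≤ e) {m : Multiset ℕ} (hm : LowTriple k m) :
    Xm K e k m ≡ Xm K e k ((k - 1) ::ₘ bal k) := by
  have hk2 := hm.two_le
  have hs := hm.2.2
  refine Xm_smodEq_of_low hke hm.2.1 ?_ (by simp [hm.1, bal]) (by simp [bal]; omega)
  simp only [bal, Multiset.insert_eq_cons, Multiset.mem_cons, Multiset.mem_singleton]
  omega

lemma smodEq_of_highPair_or_lowTriple (h2k : 2 * k ≤ e) {m n : Multiset ℕ}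
    (hm : HighPair e k m ∨ LowTriple k m) (hn : HighPair e k n ∨ LowTriple k n) :
    Xm K e k m ≡ Xm K e k n := by
  by_cases hk2 : 2 ≤ k
  · have hbal : ∀ {m}, HighPair e k m ∨ LowTriple k m →
        Xm K e k m ≡ Xm K e k ((k - 1) ::ₘ bal k) := fun h =>
      h.elim (·.smodEq_bal hk2) (·.smodEq_bal (by omega))
    exact (hbal hm).trans (hbal hn).symm
  · have hhigh : ∀ {m}, HighPair e k m ∨ LowTriple k m → HighPair e k m := fun h =>
      h.resolve_right fun h => hk2 h.two_le
    exact (hhigh hm).smodEq (hhigh hn)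

lemma Valid.deg_ne_gap (hk : 0 < k) (h2k : 2 * k ≤ e) {m : Multiset ℕ} (hm : Valid e k m)
    {s : ℕ} (hs : k ≤ s ∧ s < 2 * k ∨ s + 1 = e + 2 * k) : deg e m ≠ e + s := by
  intro hd
  rcases lt_or_ge (Multiset.card m) 3 with hc | hc
  · interval_cases h : Multiset.card m
    · rw [Multiset.card_eq_zero.1 h, deg_zero] at hd
      omega
    · obtain ⟨a, rfl⟩ := Multiset.card_eq_one.1 h
      have := hm a (by simp)
      simp [deg] at hd
      omega
    · obtain ⟨a, b, rfl⟩ := Multiset.card_eq_two.1 h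
      have := hm a (by simp)
      have := hm b (by simp)
      simp [deg] at hd
      omega
  · have : e * 3 ≤ e * Multiset.card m := Nat.mul_le_mul_left e hc
    unfold deg at hd
    omega

lemma Exceptional.deg_ne (hk : 0 < k) (h2k : 2 * k ≤ e) {m m' : Multiset ℕ}
    (hm : Exceptional e k m) (hm' : Valid e k m') : deg e (0 ::ₘ m') ≠ deg e m := by
  have gap := fun s hs => hm'.deg_ne_gap hk h2k (s := s) hs
  rw [deg_cons]
  unfold deg at gap ⊢
  rcases hm with ⟨hc, -, hs⟩ | ⟨hc, -, hs⟩ | ⟨hc, -, hs⟩ <;> rw [hc]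
  · have := gap m.sum (by omega)
    omega
  all_goals have := gap (e + 2 * k - 1) (by omega); omega

lemma Valid.zero_cons (hk : 0 < k) (h2k : 2 * k ≤ e) {m : Multiset ℕ} (hm : Valid e k m) :
    Valid e k (0 ::ₘ m) := by
  intro i hi
  rcases Multiset.mem_cons.1 hi with rfl | hi
  exacts [⟨by omega, Or.inl hk⟩, hm i hi]

lemma Absorbs.deg_ne (hk : 0 < k) (h2k : 2 * k ≤ e) {m n : Multiset ℕ} (hm : Absorbs K e k m)
    (hmv : Valid e k m) (hn : Exceptional e k n) : deg e m ≠ deg e n := by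
  obtain ⟨m', hm', h⟩ := hm
  rw [deg_eq_of_smodEq hk h2k hmv (hm'.zero_cons hk h2k) h]
  exact hn.deg_ne hk h2k hm'

lemma Exceptional.smodEq (h2k : 2 * k ≤ e) {m n : Multiset ℕ} (hm : Exceptional e k m)
    (hn : Exceptional e k n) (hd : deg e m = deg e n) : Xm K e k m ≡ Xm K e k n := by
  unfold deg at hd
  rcases hm with hm | hm <;> rcases hn with hn | hn
  · exact Xm_smodEq_of_low (by omega) hm.2.1 hn.2.1 (hm.1.trans hn.1.symm)
      (by rw [hm.1, hn.1] at hd; omega)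
  · have := hm.2.2
    rcases hn with ⟨hc, -, hs⟩ | ⟨hc, -, hs⟩ <;> rw [hm.1, hc] at hd <;> omega
  · have := hn.2.2
    rcases hm with ⟨hc, -, hs⟩ | ⟨hc, -, hs⟩ <;> rw [hn.1, hc] at hd <;> omega
  · exact smodEq_of_highPair_or_lowTriple h2k hm hn

lemma absorbs_high_pair (hk : 0 < k) (h2k : 2 * k ≤ e) {x y : ℕ} (hx : 2 * k ≤ x ∧ x < e)
    (hy : 2 * k ≤ y ∧ y < e) (hxy : x + y + 1 ≠ e + 2 * k) : Absorbs K e k {x, y} := by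
  have hXY : Xm K e k {x, y} = Xb K e k x * Xb K e k y := by
    simp [Xb_of_lt hx.2, Xb_of_lt hy.2]
  rcases le_or_gt (e + 2 * k) (x + y) with hs | hs
  · -- `X_x X_y ≡ X_{x+y-e} X_e`, and `X_e = X_0 ^ 2`
    have h := Xb_mul_Xb_smodEq_high (K := K) (e := e) (k := k) (x := x) (y := y)
      (x' := x + y - e) (y' := e) (by omega) (by omega) (by omega) (by omega) (by omega)
    rw [← hXY, Xb_eq_Xm, Xb_eq_Xm, ← Xm_add] at h
    refine (absorbs_of_zero_mem ?_ ?_).of_smodEq h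
    · exact (valid_xb h2k (Or.inr (by omega)) (by omega)).add (valid_xb h2k (by omega) (by omega))
    · simp [xb, bal]
  · set c := x + y - 2 * k
    have h : Xm K e k {x, y} ≡ Xm K e k ((k - 1) ::ₘ xb e (c + k + 1)) :=
      calc Xm K e k {x, y} = Xb K e k x * Xb K e k y := hXY
        _ ≡ Xb K e k c * Xb K e k (2 * k) :=
            Xb_mul_Xb_smodEq_high (by omega) (by omega) (by omega) (by omega) (by omega)
        _ ≡ Xb K e k (k - 1) * Xb K e k (c + k + 1) :=
            (smodEq_of_colsB (by omega) (by omega)).symm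
        _ = Xm K e k ((k - 1) ::ₘ xb e (c + k + 1)) := by
            rw [Xb_of_lt (by omega), Xb_eq_Xm (c + k + 1), Xm_cons]
    refine Absorbs.of_smodEq ?_ h
    rcases lt_or_ge (c + k + 1) e with hce | hce
    · rw [xb_of_lt hce]
      exact absorbs_low_high h2k (by omega) (by omega) hce
    · -- a low triple of sum at most `2k - 2`, which can be rearranged to contain `0`
      rw [xb_of_le hce]
      refine absorbs_of_low_of_sum_le hk (by omega) ?_ (Multiset.cons_ne_zero) ?_
      · simp only [bal, Multiset.insert_eq_cons, Multiset.mem_cons, Multiset.mem_singleton]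
        omega
      · simp [bal]
        omega

lemma absorbs_high_cube (hk : 0 < k) (h2k : 2 * k ≤ e) (hek : k + 4 ≤ e) {x : ℕ}
    (hx : 2 * k ≤ x ∧ x < e) (hxx : x + x + 1 = e + 2 * k) : Absorbs K e k {x, x, x} := by
  rcases eq_or_ne x (2 * k) with rfl | hx2k
  · -- `e = 2k + 1`, and a minor of `B` gives `X_{2k} ^ 2 ≡ X_{k-1} X_{⌊k/2⌋} X_{⌈k/2⌉}`
    have hp : HighPair e k {2 * k, 2 * k} := ⟨rfl, by simp; omega, by simp; omega⟩
    have h : Xm K e k {2 * k, 2 * k, 2 * k} ≡ Xm K e k ((k - 1) ::ₘ bal k + {2 * k}) := by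
      simpa [mul_assoc] using (hp.smodEq_bal (K := K) (by omega)).mul (SModEq.refl _)
    refine Absorbs.of_smodEq ?_ h
    refine absorbs_of_mem_low_high h2k ?_ (i := k - 1) (j := 2 * k) (by simp) (by simp)
      (by omega) le_rfl
    intro i hi
    simp only [bal, Multiset.insert_eq_cons, Multiset.cons_add, Multiset.mem_cons,
      Multiset.singleton_add, Multiset.mem_singleton] at hi
    omega
  · -- `X_x X_x ≡ X_{2k} X_{e-1}`, and `x + (e - 1) ≠ e + 2k - 1`
    have h : Xm K e k {x, x, x} ≡ Xm K e k {2 * k, e - 1, x} := by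
      have := (Xb_mul_Xb_smodEq_high (K := K) (e := e) (k := k) (x := x) (y := x)
        (x' := 2 * k) (y' := e - 1) (by omega) (by omega) (by omega) (by omega) (by omega)).mul
        (SModEq.refl (Xv K e k x))
      rw [Xb_of_lt hx.2, Xb_of_lt (by omega), Xb_of_lt (by omega)] at this
      simpa [mul_assoc] using this
    have hv : Valid e k {2 * k, e - 1, x} := by simp [Valid]; omega
    exact ((absorbs_high_pair hk h2k (x := e - 1) (by omega) hx (by omega)).of_le
      (Multiset.le_cons_self _ _) hv).of_smodEq h

lemma absorbs_high_triple (hk : 0 < k) (h2k : 2 * k ≤ e) (hek : k + 4 ≤ e) {x y z : ℕ}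
    (hx : 2 * k ≤ x ∧ x < e) (hy : 2 * k ≤ y ∧ y < e) (hz : 2 * k ≤ z ∧ z < e) :
    Absorbs K e k {x, y, z} := by
  have hv : Valid e k {x, y, z} := by simp [Valid]; omega
  by_cases hxy : x + y + 1 = e + 2 * k
  swap
  · exact (absorbs_high_pair hk h2k hx hy hxy).of_le
      (Multiset.cons_le_cons _ (Multiset.singleton_le.2 (by simp))) hv
  by_cases hxz : x + z + 1 = e + 2 * k
  swap
  · exact (absorbs_high_pair hk h2k hx hz hxz).of_le
      (Multiset.cons_le_cons _ (Multiset.le_cons_self _ _)) hv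
  by_cases hyz : y + z + 1 = e + 2 * k
  swap
  · exact (absorbs_high_pair hk h2k hy hz hyz).of_le (Multiset.le_cons_self _ _) hv
  obtain rfl : y = x := by omega
  obtain rfl : z = y := by omega
  exact absorbs_high_cube hk h2k hek hz hyz

lemma absorbs_cons_bal (hk : 0 < k) (h2k : 2 * k ≤ e) {s : ℕ} {rest : Multiset ℕ}
    (hs : k ≤ s) (hs' : s + 2 ≤ 2 * k) (hrest : ∀ i ∈ rest, i < k)
    (hsk : s = k → 2 * k < e ∧ rest ≠ 0) :
    Absorbs K e k ((k - 1) ::ₘ (bal s + rest)) := by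
  -- the minor of `B` at column `c = e + s - k - 1` turns `X_{k-1} X_{e+s}` into `X_c X_{2k}`
  set c := e + s - (k + 1)
  have hB := smodEq_of_colsB (K := K) (e := e) (k := k) (c := c) (by omega) (by omega)
  rw [show c + k + 1 = e + s by omega, Xb_of_lt (show k - 1 < e by omega), Xb_eq_Xm (e + s),
    xb_of_le (by omega), Nat.add_sub_cancel_left, Xb_eq_Xm c, Xb_eq_Xm (2 * k), ← Xm_add] at hB
  have hrv : Valid e k rest := fun i hi => ⟨by have := hrest i hi; omega, Or.inl (hrest i hi)⟩
  have hn : Valid e k (xb e c + xb e (2 * k) + rest) :=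
    ((valid_xb h2k (Or.inr (by omega)) (by omega)).add
      (valid_xb h2k (Or.inr le_rfl) (by omega))).add hrv
  have h : Xm K e k ((k - 1) ::ₘ (bal s + rest)) ≡ Xm K e k (xb e c + xb e (2 * k) + rest) := by
    simpa [mul_assoc] using hB.mul (SModEq.refl (Xm K e k rest))
  refine Absorbs.of_smodEq ?_ h
  rcases eq_or_lt_of_le hs with rfl | hs
  · -- `c = e - 1` is high, and `rest` provides a low index
    obtain ⟨he, hr0⟩ := hsk rfl
    obtain ⟨t, ht⟩ := Multiset.exists_mem_of_ne_zero hr0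
    rw [xb_of_lt (show c < e by omega)] at hn ⊢
    exact absorbs_of_mem_low_high h2k hn (i := t) (j := c) (by simp [ht]) (by simp) (hrest t ht)
      (by omega)
  · rw [xb_of_le (show e ≤ c by omega)] at hn ⊢
    rcases eq_or_lt_of_le h2k with h | h
    · exact absorbs_of_zero_mem hn (by simp [h, xb, bal])
    · rw [xb_of_lt h] at hn ⊢
      exact absorbs_of_mem_low_high h2k hn (i := (c - e) / 2) (j := 2 * k) (by simp [bal])
        (by simp) (by omega) le_rfl

lemma absorbs_or_of_low (hk : 0 < k) (h2k : 2 * k ≤ e) (hek : k + 4 ≤ e) {m : Multiset ℕ}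
    (hm : ∀ i ∈ m, i < k) (hc : 2 ≤ Multiset.card m) :
    Absorbs K e k m ∨ LowPair k m ∨ LowTriple k m := by
  set n := Multiset.card m
  set σ := m.sum
  have hm0 : m ≠ 0 := fun h => by simp [n, h] at hc
  have hσn : σ ≤ n * (k - 1) := by
    simpa using Multiset.sum_le_card_nsmul m (k - 1) fun i hi => by have := hm i hi; omega
  have hn1 : n * (k - 1) = (n - 1) * (k - 1) + (k - 1) := by
    rw [← Nat.succ_mul]; congr 1; omega
  rcases le_or_gt σ ((n - 1) * (k - 1)) with hle | hgt
  · exact Or.inl (absorbs_of_low_of_sum_le hk (by omega) hm hm0 hle)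
  have hk2 : 2 ≤ k := by omega
  rcases eq_or_lt_of_le hc with h2 | h3
  · have : (n - 1) * (k - 1) = k - 1 := by rw [← h2]; simp
    exact Or.inr (Or.inl ⟨h2.symm, hm, by omega, by omega⟩)
  by_cases hD : n = 3 ∧ σ + 1 = 2 * k
  · exact Or.inr (Or.inr ⟨hD.1, hm, hD.2⟩)
  -- rearrange `m` as `(k - 1) ::ₘ (bal s + rest)`, with `rest` as full as possible
  set P := (n - 3) * (k - 1)
  have hn3 : (n - 1) * (k - 1) = P + 2 * (k - 1) := by
    rw [← Nat.add_mul]; congr 1; omega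
  have hPn : n - 3 ≤ P := Nat.le_mul_of_pos_right _ (by omega)
  have hP : n = 3 → P = 0 := fun h => by simp [P, h]
  set s := min (2 * k - 2) (σ - (k - 1))
  obtain ⟨rest, hrc, hrs, hrk⟩ := exists_low_of_sum_le hk (n - 3) (σ - (k - 1) - s) (by omega)
  have hsk : s = k → 2 * k < e ∧ rest ≠ 0 := fun hs =>
    ⟨by omega, fun h => by rw [h, Multiset.card_zero] at hrc; omega⟩
  refine Or.inl ((absorbs_cons_bal hk h2k (s := s) (by omega) (by omega) hrk hsk).of_smodEq
    (Xm_smodEq_of_low (by omega) hm ?_ (by simp [bal, hrc]; omega) (by simp [bal, hrs]; omega)))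
  intro i hi
  simp only [bal, Multiset.insert_eq_cons, Multiset.cons_add, Multiset.mem_cons,
    Multiset.singleton_add] at hi
  rcases hi with h | h | h | h
  exacts [by omega, by omega, by omega, hrk i h]

lemma absorbs_or_highPair_of_high (hk : 0 < k) (h2k : 2 * k ≤ e) (hek : k + 4 ≤ e)
    {m : Multiset ℕ} (hm : ∀ i ∈ m, 2 * k ≤ i ∧ i < e) (hc : 2 ≤ Multiset.card m) :
    Absorbs K e k m ∨ HighPair e k m := by
  have hv : Valid e k m := fun i hi => ⟨(hm i hi).2, Or.inr (hm i hi).1⟩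
  obtain ⟨x, y, r, rfl⟩ : ∃ x y r, m = x ::ₘ y ::ₘ r := by
    obtain ⟨x, hx⟩ := Multiset.card_pos_iff_exists_mem.1 (show 0 < Multiset.card m by omega)
    obtain ⟨m', rfl⟩ := Multiset.exists_cons_of_mem hx
    obtain ⟨y, hy⟩ := Multiset.card_pos_iff_exists_mem.1 (show 0 < Multiset.card m' by
      simp at hc; omega)
    obtain ⟨r, rfl⟩ := Multiset.exists_cons_of_mem hy
    exact ⟨x, y, r, rfl⟩
  have hx := hm x (by simp)
  have hy := hm y (by simp)
  by_cases hxy : x + y + 1 = e + 2 * k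
  · rcases Multiset.empty_or_exists_mem r with rfl | ⟨z, hz⟩
    · exact Or.inr ⟨rfl, hm, by simp; omega⟩
    obtain ⟨r', rfl⟩ := Multiset.exists_cons_of_mem hz
    exact Or.inl ((absorbs_high_triple hk h2k hek hx hy (hm z (by simp))).of_le
      (Multiset.cons_le_cons x (Multiset.cons_le_cons y (Multiset.singleton_le.2
        (Multiset.mem_cons_self z r')))) hv)
  · exact Or.inl ((absorbs_high_pair hk h2k hx hy hxy).of_le
      (Multiset.cons_le_cons x (Multiset.singleton_le.2 (Multiset.mem_cons_self y r))) hv)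

lemma absorbs_or_exceptional (hk : 0 < k) (h2k : 2 * k ≤ e) (hek : k + 4 ≤ e)
    {m : Multiset ℕ} (hm : Valid e k m) (hc : 2 ≤ Multiset.card m) :
    Absorbs K e k m ∨ Exceptional e k m := by
  by_cases hlow : ∀ i ∈ m, i < k
  · rcases absorbs_or_of_low (K := K) hk h2k hek hlow hc with h | h | h
    exacts [Or.inl h, Or.inr (Or.inl h), Or.inr (Or.inr (Or.inr h))]
  by_cases hhigh : ∀ i ∈ m, 2 * k ≤ i
  · rcases absorbs_or_highPair_of_high (K := K) hk h2k hek
      (fun i hi => ⟨hhigh i hi, (hm i hi).1⟩) hc with h | h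
    exacts [Or.inl h, Or.inr (Or.inr (Or.inl h))]
  simp only [not_forall, not_lt, not_le] at hlow hhigh
  obtain ⟨j, hj, hjk⟩ := hlow
  obtain ⟨i, hi, hik⟩ := hhigh
  exact Or.inl (absorbs_of_mem_low_high h2k hm hi hj (by have := (hm i hi).2; omega)
    (by have := (hm j hj).2; omega))

lemma card_le_one_of_deg_lt {m : Multiset ℕ} (h : deg e m < 2 * e) : Multiset.card m ≤ 1 := by
  by_contra hc
  have : e * 2 ≤ e * Multiset.card m := Nat.mul_le_mul_left e (by omega)
  unfold deg at h
  omega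

lemma Valid.two_le_card (he : 0 < e) {m : Multiset ℕ} (hm : Valid e k m) (h : 2 * e ≤ deg e m) :
    2 ≤ Multiset.card m := by
  by_contra hc
  rcases Multiset.eq_zero_or_eq_singleton_of_card_le_one (m := m) (by omega) with rfl | ⟨a, rfl⟩
  · simp at h
    omega
  · have := (hm a (by simp)).1
    simp [deg] at h
    omega

lemma eq_of_deg_eq (he : 0 < e) {m n : Multiset ℕ} (hm : Multiset.card m ≤ 1)
    (hn : Multiset.card n ≤ 1) (h : deg e m = deg e n) : m = n := by
  rcases Multiset.eq_zero_or_eq_singleton_of_card_le_one hm with rfl | ⟨a, rfl⟩ <;>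
    rcases Multiset.eq_zero_or_eq_singleton_of_card_le_one hn with rfl | ⟨b, rfl⟩ <;>
    simp [deg] at h ⊢ <;> omega

theorem Xm_smodEq_of_deg_eq (hk : 0 < k) (h2k : 2 * k ≤ e) (hek : k + 4 ≤ e) (d : ℕ) :
    ∀ {m n : Multiset ℕ}, Valid e k m → Valid e k n → deg e m = d → deg e n = d →
      Xm K e k m ≡ Xm K e k n := by
  induction d using Nat.strong_induction_on with
  | _ d ih =>
  intro m n hm hn hmd hnd
  rcases lt_or_ge d (2 * e) with hd | hd
  · rw [eq_of_deg_eq (by omega) (card_le_one_of_deg_lt (hmd ▸ hd))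
      (card_le_one_of_deg_lt (hnd ▸ hd)) (hmd.trans hnd.symm)]
  have hclass : ∀ {m}, Valid e k m → deg e m = d → Absorbs K e k m ∨ Exceptional e k m :=
    fun hm hmd => absorbs_or_exceptional hk h2k hek hm (hm.two_le_card (by omega) (hmd ▸ hd))
  rcases hclass hm hmd with hma | hme <;> rcases hclass hn hnd with hna | hne
  · obtain ⟨m', hm', hmm'⟩ := hma
    obtain ⟨n', hn', hnn'⟩ := hna
    have h₁ := deg_eq_of_smodEq hk h2k hm (hm'.zero_cons hk h2k) hmm'
    have h₂ := deg_eq_of_smodEq hk h2k hn (hn'.zero_cons hk h2k) hnn'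
    rw [deg_cons] at h₁ h₂
    calc Xm K e k m ≡ Xm K e k (0 ::ₘ m') := hmm'
      _ ≡ Xm K e k (0 ::ₘ n') := by
          simpa using (SModEq.refl (Xv K e k 0)).mul
            (ih (deg e m') (by omega) hm' hn' rfl (by omega))
      _ ≡ Xm K e k n := hnn'.symm
  · exact absurd (hmd.trans hnd.symm) (hma.deg_ne hk h2k hm hne)
  · exact absurd (hnd.trans hmd.symm) (hna.deg_ne hk h2k hn hme)
  · exact hme.smodEq h2k hne (hmd.trans hnd.symm)

def indices (d : SallyVar e k →₀ ℕ) : Multiset ℕ :=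
  d.toMultiset.map fun v : SallyVar e k => v.1

lemma valid_indices (d : SallyVar e k →₀ ℕ) : Valid e k (indices d) := by
  intro i hi
  obtain ⟨v, -, rfl⟩ := Multiset.mem_map.1 hi
  exact v.2

lemma indices_zero : indices (0 : SallyVar e k →₀ ℕ) = 0 := rfl

lemma indices_single_add (v : SallyVar e k) (b : ℕ) (d : SallyVar e k →₀ ℕ) :
    indices (Finsupp.single v b + d) = Multiset.replicate b v.1 + indices d := by
  rw [indices, Finsupp.toMultiset_add, Multiset.map_add, Finsupp.toMultiset_single,
    Multiset.nsmul_singleton, Multiset.map_replicate, indices]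

lemma monomial_eq_Xm (d : SallyVar e k →₀ ℕ) : monomial d (1 : K) = Xm K e k (indices d) := by
  induction d using Finsupp.induction with
  | zero => rfl
  | single_add v b d _ _ ih =>
    have hv : Xm K e k (Multiset.replicate b v.1) = X v ^ b := by
      rw [Xm, Multiset.map_replicate, Multiset.prod_replicate, Xv, dif_pos v.2]
      rfl
    rw [indices_single_add, Xm_add, ← ih, hv, X_pow_eq_monomial, monomial_mul, one_mul]

lemma deg_indices (d : SallyVar e k →₀ ℕ) :
    deg e (indices d) = Finsupp.weight (fun v : SallyVar e k => e + v.1) d := by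
  induction d using Finsupp.induction with
  | zero => simp [indices_zero]
  | single_add v b d _ _ ih =>
    rw [indices_single_add, deg_add, ih, map_add, Finsupp.weight_single]
    simp [deg, smul_eq_mul]
    ring

end Sally

/-- The defining ideal of the semigroup ring `K[S_k]` equals `I₂(A^e_k) + I₂(B^e_k)`. -/
theorem sallyIdeal_eq_minors (K : Type) [Field K] (e k : ℕ) (hk : 0 < k)
    (h2k : 2 * k ≤ e) (hek : 4 ≤ e - k) :
    sallyIdeal K e k = Ideal.span (minorsA K e k) ⊔ Ideal.span (minorsB K e k) := by
  refine le_antisymm ?_ (Sally.minorIdeal_le_ker hk h2k)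
  refine ker_aeval_X_pow_le (fun v : SallyVar e k => e + v.1) fun d d' hw => ?_
  rw [Sally.monomial_eq_Xm, Sally.monomial_eq_Xm]
  exact SModEq.sub_mem.1 (Sally.Xm_smodEq_of_deg_eq hk h2k (by omega) _
    (Sally.valid_indices d) (Sally.valid_indices d') rfl
    (by rw [Sally.deg_indices, Sally.deg_indices, hw]))
end
end

section
/- Let e, k, j be positive integers with e/2 < k < e - 3, j + k ≤ e - 1, and suppose either e + j - 2 ≥ 2k or 2j ≥ k + 1. Then the numerical semigroup S_k^e(j) = ⟨e,...,e+j-1, e+j+k,...,2e-1⟩ is not symmetric. -/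
/-!
The map `x ↦ F - x` sends the elements of `S` below the Frobenius number `F` injectively into the
gaps, so `2 g ≥ F + 1`, with equality exactly when this map hits every gap. For `S_k^e(j)` the
Frobenius number is `F = 2e + j + k - 1`, and both `1` and `F - 1` are gaps, so the gap `1` is
missed and `2 g ≥ F + 2`. Above `F` everything lies in `S`, because sums of two or three
generators fill the window `[2e + j + k, 3e + j + k)` of length `e`; the hypothesis on `j` and `k`
enters only through `2k + 2 ≤ e + j`, which closes the last hole in that window.
-/

open Finset

section Symmetry

variable {S : AddSubmonoid ℕ} {F : ℕ}

theorem frobeniusNumber_eq_of_forall_lt_mem (hF : F ∉ S) (hlt : ∀ n, F < n → n ∈ S) :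
    frobeniusNumber S = F :=
  IsGreatest.csSup_eq ⟨hF, fun _ hx => not_lt.1 fun h => hx (hlt _ h)⟩

theorem genusOf_eq_card_filter_not_mem [DecidablePred (· ∈ S)] (hlt : ∀ n, F < n → n ∈ S) :
    genusOf S = #{n ∈ range (F + 1) | n ∉ S} := by
  have hgaps : gapsOf S = ↑({n ∈ range (F + 1) | n ∉ S} : Finset ℕ) := by
    ext n
    simp only [gapsOf, coe_filter, mem_range, Set.mem_ofPred_eq, Nat.lt_succ_iff]
    exact ⟨fun hn => ⟨not_lt.1 fun h => hn (hlt n h), hn⟩, And.right⟩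
  rw [genusOf, hgaps, Nat.card_coe_set_eq, Set.ncard_coe_finset]

theorem card_filter_mem_lt_card_filter_not_mem [DecidablePred (· ∈ S)] (hF : F ∉ S)
    (hlt : ∀ n, F < n → n ∈ S) {x : ℕ} (hx : x ∉ S) (hFx : F - x ∉ S) :
    #{n ∈ range (F + 1) | n ∈ S} < #{n ∈ range (F + 1) | n ∉ S} := by
  have hxF : x ≤ F := not_lt.1 fun h => hx (hlt x h)
  have hx_mem : x ∈ ({n ∈ range (F + 1) | n ∉ S} : Finset ℕ) := by
    simp [hx, Nat.lt_succ_of_le hxF]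
  rw [← card_erase_add_one hx_mem, Nat.lt_succ_iff]
  refine card_le_card_of_injOn (F - ·) (fun y hy => ?_) (fun y hy z hz hyz => ?_)
  · simp only [coe_filter, mem_range, Set.mem_ofPred_eq] at hy
    have hyF : y ≤ F := by omega
    have hgap : F - y ∉ S := fun h =>
      hF (by simpa [Nat.add_sub_cancel' hyF] using S.add_mem hy.2 h)
    have hne : F - y ≠ x := fun h => hFx (by rw [← h, Nat.sub_sub_self hyF]; exact hy.2)
    simp [hne, hgap]
  · simp only [coe_filter, mem_range, Set.mem_ofPred_eq] at hy hz
    simp only at hyz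
    omega

theorem not_isSymmetricNS_of_gap_pair (hF : F ∉ S) (hlt : ∀ n, F < n → n ∈ S)
    {x : ℕ} (hx : x ∉ S) (hFx : F - x ∉ S) : ¬ IsSymmetricNS S := by
  classical
  have hlt_card := card_filter_mem_lt_card_filter_not_mem hF hlt hx hFx
  have hsum := card_filter_add_card_filter_not (s := range (F + 1)) (p := (· ∈ S))
  rw [card_range] at hsum
  rw [IsSymmetricNS, genusOf_eq_card_filter_not_mem hlt, frobeniusNumber_eq_of_forall_lt_mem hF hlt]
  omega

end Symmetry

section Covering

variable {S : AddSubmonoid ℕ}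

theorem Icc_add_Icc_subset_of_subset {a₁ b₁ a₂ b₂ : ℕ} (hab₁ : a₁ ≤ b₁) (hab₂ : a₂ ≤ b₂)
    (h₁ : Set.Icc a₁ b₁ ⊆ S) (h₂ : Set.Icc a₂ b₂ ⊆ S) : Set.Icc (a₁ + a₂) (b₁ + b₂) ⊆ S := by
  rintro n ⟨hlo, hhi⟩
  obtain ⟨x, y, hx, hy, rfl⟩ : ∃ x y, x ∈ Set.Icc a₁ b₁ ∧ y ∈ Set.Icc a₂ b₂ ∧ x + y = n := by
    rcases le_total b₁ (n - a₂) with h | h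
    · exact ⟨b₁, n - b₁, ⟨hab₁, le_rfl⟩, ⟨by omega, by omega⟩, by omega⟩
    · exact ⟨n - a₂, a₂, ⟨by omega, h⟩, ⟨le_rfl, hab₂⟩, by omega⟩
  exact S.add_mem (h₁ hx) (h₂ hy)

theorem forall_le_mem_of_Ico_subset {c m : ℕ} (hm : m ∈ S) (hm₀ : 0 < m)
    (h : Set.Ico c (c + m) ⊆ S) (n : ℕ) (hn : c ≤ n) : n ∈ S := by
  induction n using Nat.strong_induction_on with
  | _ n ih =>
    by_cases hnm : n < c + m
    · exact h ⟨hn, hnm⟩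
    · have hsplit : n = m + (n - m) := by omega
      rw [hsplit]
      exact S.add_mem hm (ih _ (by omega) (by omega))

end Covering

section Sally

variable {e k j : ℕ}

theorem Icc_subset_sally_left (hj : 0 < j) : Set.Icc e (e + j - 1) ⊆ sally e k j :=
  fun _ ⟨hlo, hhi⟩ => AddSubmonoid.subset_closure (Or.inl ⟨hlo, by omega⟩)

theorem Icc_subset_sally_right (he : 0 < e) : Set.Icc (e + j + k) (2 * e - 1) ⊆ sally e k j :=
  fun _ ⟨hlo, hhi⟩ => AddSubmonoid.subset_closure (Or.inr ⟨hlo, by omega⟩)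

theorem mem_sally_cases (hjk : j + k ≤ e) {n : ℕ} (hn : n ∈ sally e k j) :
    n = 0 ∨ (e ≤ n ∧ n < e + j) ∨ (e + j + k ≤ n ∧ n < 2 * e) ∨
      (2 * e ≤ n ∧ n + 2 ≤ 2 * e + 2 * j) ∨ 2 * e + j + k ≤ n := by
  induction hn using AddSubmonoid.closure_induction with
  | mem n hn => rcases hn with ⟨h₁, h₂⟩ | ⟨h₁, h₂⟩ <;> omega
  | zero => exact Or.inl rfl
  | add a b _ _ ha hb => omega

theorem mem_sally_of_le (hj : 0 < j) (hjk : j + k < e) (h2k : 2 * k + 2 ≤ e + j) {n : ℕ}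
    (hn : 2 * e + j + k ≤ n) : n ∈ sally e k j := by
  have hA := Icc_subset_sally_left (e := e) (k := k) hj
  have hB := Icc_subset_sally_right (j := j) (k := k) (by omega : 0 < e)
  have hAA := Icc_add_Icc_subset_of_subset (by omega) (by omega) hA hA
  have hAB := Icc_add_Icc_subset_of_subset (by omega) (by omega) hA hB
  have hAAA := Icc_add_Icc_subset_of_subset (by omega) (by omega) hA hAA
  have hBB := Icc_add_Icc_subset_of_subset (by omega) (by omega) hB hB
  have hwindow : Set.Ico (2 * e + j + k) (2 * e + j + k + e) ⊆ sally e k j := by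
    rintro x ⟨hlo, hhi⟩
    by_cases h₁ : x ≤ e + j - 1 + (2 * e - 1)
    · exact hAB ⟨by omega, h₁⟩
    by_cases h₂ : x ≤ e + j - 1 + (e + j - 1 + (e + j - 1))
    · exact hAAA ⟨by omega, h₂⟩
    -- `h2k` makes `A + A + A` reach `B + B`
    · exact hBB ⟨by omega, by omega⟩
  exact forall_le_mem_of_Ico_subset (hA ⟨le_rfl, by omega⟩) (by omega) hwindow n hn

end Sally

theorem sally_not_symmetric_large_k_general (e k j : ℕ) (hj : 0 < j)
    (hk : e < 2 * k) (hjk : j + k ≤ e - 1)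
    (h : e + j - 2 ≥ 2 * k ∨ 2 * j ≥ k + 1) :
    ¬ IsSymmetricNS (sally e k j) := by
  have hjk' : j + k < e := by omega
  have h2k : 2 * k + 2 ≤ e + j := by omega
  have hgap : ∀ n, n ∈ sally e k j → n ≠ 1 ∧ n ≠ 2 * e + j + k - 1 ∧ n ≠ 2 * e + j + k - 2 :=
    fun n hn => by have := mem_sally_cases hjk'.le hn; omega
  refine not_isSymmetricNS_of_gap_pair (F := 2 * e + j + k - 1) (x := 1)
    (fun hF => (hgap _ hF).2.1 rfl) (fun n hn => mem_sally_of_le hj hjk' h2k (by omega))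
    (fun h1 => (hgap _ h1).1 rfl) (fun hF1 => (hgap _ hF1).2.2 (by omega))

theorem sally_not_symmetric_large_k (e k j : ℕ) (hj : 0 < j)
    (hk : e < 2 * k) (hk' : k < e - 3) (hjk : j + k ≤ e - 1)
    (h : e + j - 2 ≥ 2 * k ∨ 2 * j ≥ k + 1) :
    ¬ IsSymmetricNS (sally e k j) :=
  sally_not_symmetric_large_k_general e k j hj hk hjk h
end

section
/- Let e, k, j, n be positive integers with n ≥ 2, j ≥ 2, j + k ≤ e - 1, satisfying (n-1)(e-2) + (n-1)j < nk ≤ (n-1)e + nj - (2n-1). Then the Frobenius number of S_k^e(j) is ne + nj + nk - 1 and its genus is n²k - n(n-1)j - (n-1)²e + (n-1)(2n-1) + e - 1. -/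
open Set

section IntervalUnion

variable {L U : ℕ → ℕ} {S : AddSubmonoid ℕ}

theorem Icc_add_Icc_subset_of_subset_s12 {p q r s : ℕ} (hpq : p ≤ q) (hrs : r ≤ s)
    (h₁ : Icc p q ⊆ S) (h₂ : Icc r s ⊆ S) : Icc (p + r) (q + s) ⊆ S := by
  rintro x ⟨hlo, hhi⟩
  rw [show x = min q (x - r) + (x - min q (x - r)) by omega]
  exact S.add_mem (h₁ ⟨by omega, by omega⟩) (h₂ ⟨by omega, by omega⟩)

theorem notMem_iUnion_Icc_iff (hL : Monotone L) (hU : Monotone U)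
    (hU_top : ∀ x, ∃ m, x ≤ U m) {x : ℕ} :
    x ∉ ⋃ m, Icc (L m) (U m) ↔ x < L 0 ∨ ∃ m, x ∈ Ioo (U m) (L (m + 1)) := by
  classical
  simp only [mem_iUnion, mem_Icc, mem_Ioo, not_exists, not_and, not_le]
  constructor
  · intro h
    refine or_iff_not_imp_left.2 fun h0 => ?_
    obtain ⟨m, hm, hmin⟩ : ∃ m, x ≤ U m ∧ ∀ i < m, U i < x :=
      ⟨Nat.find (hU_top x), Nat.find_spec (hU_top x),
        fun i hi => not_le.1 (Nat.find_min (hU_top x) hi)⟩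
    cases m with
    | zero => exact absurd hm (not_le.2 (h 0 (not_lt.1 h0)))
    | succ m =>
      exact ⟨m, hmin m m.lt_succ_self, lt_of_not_ge fun hLx => (h (m + 1) hLx).not_ge hm⟩
  · rintro (h0 | ⟨m, hUm, hLm⟩) i hi
    · exact absurd (h0.trans_le (hL (Nat.zero_le i))) (not_lt.2 hi)
    · rcases le_or_gt i m with him | him
      · exact (hU him).trans_lt hUm
      · exact absurd (hLm.trans_le (hL him)) (not_lt.2 hi)

theorem pairwise_disjoint_Ioo (hU : Monotone U) (hLU : ∀ m, L m ≤ U m + 1) :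
    Pairwise (Function.onFun Disjoint fun m => Finset.Ioo (U m) (L (m + 1))) := by
  have key : ∀ m m', m < m' → Disjoint (Finset.Ioo (U m) (L (m + 1)))
      (Finset.Ioo (U m') (L (m' + 1))) := by
    intro m m' hmm'
    refine Finset.disjoint_left.2 fun x hx hx' => ?_
    simp only [Finset.mem_Ioo] at hx hx'
    have := hLU (m + 1)
    have := hU (show m + 1 ≤ m' from hmm')
    omega
  intro m m' hne
  rcases lt_or_gt_of_ne hne with h | h
  · exact key m m' h
  · exact (key m' m h).symm

theorem gapsOf_eq_iUnion_Ioo (hS : (S : Set ℕ) = ⋃ m, Icc (L m) (U m)) (hL : Monotone L)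
    (hU : Monotone U) (hU_top : ∀ x, ∃ m, x ≤ U m) :
    gapsOf S = ⋃ m, Ioo (U m) (L (m + 1)) := by
  have hL0 : L 0 = 0 := by
    have h0 : (0 : ℕ) ∈ ⋃ m, Icc (L m) (U m) := hS ▸ S.zero_mem
    obtain ⟨m, hm⟩ := mem_iUnion.1 h0
    exact Nat.eq_zero_of_le_zero ((hL (Nat.zero_le m)).trans hm.1)
  ext x
  change x ∉ (S : Set ℕ) ↔ _
  rw [hS, notMem_iUnion_Icc_iff hL hU hU_top, hL0]
  simp

theorem genusOf_eq_sum (hS : (S : Set ℕ) = ⋃ m, Icc (L m) (U m)) (hL : Monotone L)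
    (hU : Monotone U) (hU_top : ∀ x, ∃ m, x ≤ U m) (hLU : ∀ m, L m ≤ U m + 1) {M : ℕ}
    (hM : ∀ m ≥ M, L (m + 1) ≤ U m + 1) :
    genusOf S = ∑ m ∈ Finset.range M, (L (m + 1) - U m - 1) := by
  classical
  have hgaps : gapsOf S = ↑((Finset.range M).biUnion fun m => Finset.Ioo (U m) (L (m + 1))) := by
    rw [gapsOf_eq_iUnion_Ioo hS hL hU hU_top]
    ext x
    simp only [mem_iUnion, mem_Ioo, Finset.coe_biUnion, Finset.coe_range, Finset.coe_Ioo,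
      mem_Iio, exists_prop]
    constructor
    · rintro ⟨m, hm⟩
      exact ⟨m, lt_of_not_ge fun h => by have := hM m h; omega, hm⟩
    · rintro ⟨m, -, hm⟩
      exact ⟨m, hm⟩
  rw [genusOf, hgaps, Nat.card_coe_set_eq, ncard_coe_finset,
    Finset.card_biUnion ((pairwise_disjoint_Ioo hU hLU).set_pairwise _)]
  simp only [Nat.card_Ioo]

theorem frobeniusNumber_eq (hS : (S : Set ℕ) = ⋃ m, Icc (L m) (U m)) (hL : Monotone L)
    (hU : Monotone U) (hU_top : ∀ x, ∃ m, x ≤ U m) {M : ℕ} (hgap : U M + 1 < L (M + 1))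
    (hM : ∀ m > M, L (m + 1) ≤ U m + 1) :
    frobeniusNumber S = L (M + 1) - 1 := by
  rw [frobeniusNumber, gapsOf_eq_iUnion_Ioo hS hL hU hU_top]
  refine IsGreatest.csSup_eq ⟨mem_iUnion.2 ⟨M, by omega, by omega⟩, fun x hx => ?_⟩
  obtain ⟨m, hUx, hxL⟩ := mem_iUnion.1 hx
  rcases le_or_gt m M with h | h
  · have := hL (show m + 1 ≤ M + 1 by omega)
    omega
  · have := hM m h
    omega

end IntervalUnion

section Sally

variable {e k j : ℕ}

/-- The least sum of generators of total weight `m`, where `e, …, e + j - 1` weigh 1 and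
`e + j + k, …, 2e - 1` weigh 2. -/
def sallyLevelMin (e k j m : ℕ) : ℕ := m % 2 * e + m / 2 * (e + j + k)

@[simp]
theorem sallyLevelMin_zero : sallyLevelMin e k j 0 = 0 := by
  simp [sallyLevelMin]

@[simp]
theorem sallyLevelMin_one : sallyLevelMin e k j 1 = e := by
  simp [sallyLevelMin]

@[simp]
theorem sallyLevelMin_two : sallyLevelMin e k j 2 = e + j + k := by
  simp [sallyLevelMin]

@[simp]
theorem sallyLevelMin_two_mul (t : ℕ) : sallyLevelMin e k j (2 * t) = t * (e + j + k) := by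
  simp [sallyLevelMin]

@[simp]
theorem sallyLevelMin_two_mul_add_one (t : ℕ) :
    sallyLevelMin e k j (2 * t + 1) = e + t * (e + j + k) := by
  simp [sallyLevelMin, Nat.add_mod, show (2 * t + 1) / 2 = t by omega]

theorem sallyLevelMin_add_two (m : ℕ) :
    sallyLevelMin e k j (m + 2) = sallyLevelMin e k j m + (e + j + k) := by
  simp only [sallyLevelMin, Nat.add_mod_right, Nat.add_div_right _ two_pos]
  ring

theorem monotone_sallyLevelMin : Monotone (sallyLevelMin e k j) := by
  refine monotone_nat_of_le_succ fun m => ?_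
  obtain ⟨t, rfl | rfl⟩ := Nat.even_or_odd' m
  · simp
  · rw [show 2 * t + 1 + 1 = 2 * (t + 1) by ring, sallyLevelMin_two_mul,
      sallyLevelMin_two_mul_add_one]
    simp only [add_mul, one_mul]
    omega

theorem sallyLevelMin_le (hj : 1 ≤ j) (hjk : j + k ≤ e) (m : ℕ) :
    sallyLevelMin e k j m ≤ m * (e + j - 1) := by
  obtain ⟨t, rfl | rfl⟩ := Nat.even_or_odd' m
  · rw [sallyLevelMin_two_mul, mul_comm 2 t, mul_assoc]
    exact Nat.mul_le_mul_left t (by omega)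
  · rw [sallyLevelMin_two_mul_add_one, add_mul, one_mul, mul_comm 2 t, mul_assoc, add_comm]
    exact add_le_add (Nat.mul_le_mul_left t (by omega)) (by omega)

theorem sallyLevelMin_add_le (hjk : j + k ≤ e) (m m' : ℕ) :
    sallyLevelMin e k j (m + m') ≤ sallyLevelMin e k j m + sallyLevelMin e k j m' := by
  obtain ⟨t, rfl | rfl⟩ := Nat.even_or_odd' m <;>
    obtain ⟨t', rfl | rfl⟩ := Nat.even_or_odd' m'
  · rw [← mul_add]
    simp only [sallyLevelMin_two_mul, add_mul, le_refl]
  · rw [← add_assoc, ← mul_add]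
    simp only [sallyLevelMin_two_mul_add_one, sallyLevelMin_two_mul, add_mul]
    omega
  · rw [add_right_comm, ← mul_add]
    simp only [sallyLevelMin_two_mul_add_one, sallyLevelMin_two_mul, add_mul]
    omega
  · rw [show 2 * t + 1 + (2 * t' + 1) = 2 * (t + t' + 1) by ring, sallyLevelMin_two_mul]
    simp only [sallyLevelMin_two_mul_add_one, add_mul, one_mul]
    omega

theorem Icc_sallyLevelMin_subset_sally (hj : 1 ≤ j) (hjk : j + k ≤ e) (m : ℕ) :
    Icc (sallyLevelMin e k j m) (m * (e + j - 1)) ⊆ sally e k j := by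
  have h₁ : Icc e (e + j - 1) ⊆ sally e k j := fun x ⟨hex, hxv⟩ =>
    AddSubmonoid.subset_closure (Or.inl ⟨hex, by omega⟩)
  have h₂ : Icc (e + j + k) (2 * (e + j - 1)) ⊆ sally e k j := by
    rintro x ⟨hcx, hxv⟩
    by_cases hx2 : x < 2 * e
    · exact AddSubmonoid.subset_closure (Or.inr ⟨hcx, hx2⟩)
    · exact Icc_add_Icc_subset_of_subset_s12 (by omega) (by omega) h₁ h₁ ⟨by omega, by omega⟩
  induction m using Nat.twoStepInduction with
  | zero =>
    intro x hx
    simp only [sallyLevelMin_zero, zero_mul, Icc_self, mem_singleton_iff] at hx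
    exact hx ▸ (sally e k j).zero_mem
  | one => simpa using h₁
  | more m ih _ =>
    rw [sallyLevelMin_add_two, add_mul]
    exact Icc_add_Icc_subset_of_subset_s12 (sallyLevelMin_le hj hjk m) (by omega) ih h₂

theorem sally_subset_iUnion_Icc (hj : 1 ≤ j) (hjk : j + k ≤ e) :
    (sally e k j : Set ℕ) ⊆ ⋃ m, Icc (sallyLevelMin e k j m) (m * (e + j - 1)) := by
  intro x hx
  induction hx using AddSubmonoid.closure_induction with
  | mem x hx =>
    rcases hx with ⟨h₁, h₂⟩ | ⟨h₁, h₂⟩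
    · exact mem_iUnion.2 ⟨1, by rw [sallyLevelMin_one]; omega, by omega⟩
    · exact mem_iUnion.2 ⟨2, by rw [sallyLevelMin_two]; omega, by omega⟩
  | zero => exact mem_iUnion.2 ⟨0, by simp⟩
  | add x y _ _ hx hy =>
    obtain ⟨m, hxm⟩ := mem_iUnion.1 hx
    obtain ⟨m', hym⟩ := mem_iUnion.1 hy
    refine mem_iUnion.2 ⟨m + m', ?_, ?_⟩
    · exact (sallyLevelMin_add_le hjk m m').trans (add_le_add hxm.1 hym.1)
    · rw [add_mul]
      exact add_le_add hxm.2 hym.2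

theorem coe_sally_eq_iUnion_Icc (hj : 1 ≤ j) (hjk : j + k ≤ e) :
    (sally e k j : Set ℕ) = ⋃ m, Icc (sallyLevelMin e k j m) (m * (e + j - 1)) :=
  (sally_subset_iUnion_Icc hj hjk).antisymm
    (iUnion_subset (Icc_sallyLevelMin_subset_sally hj hjk))

theorem sallyLevelMin_two_mul_add_one_sub (hj : 1 ≤ j) (hjk : j + k ≤ e) (t : ℕ) :
    sallyLevelMin e k j (2 * t + 1) - 2 * t * (e + j - 1) - 1 = e - 1 - t * (e + j - 2 - k) := by
  have hstep : t * (e + j + k) + t * (e + j - 2 - k) = 2 * t * (e + j - 1) := by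
    rw [← mul_add, show e + j + k + (e + j - 2 - k) = 2 * (e + j - 1) by omega]
    ring
  rw [sallyLevelMin_two_mul_add_one]
  omega

theorem sallyLevelMin_two_mul_add_two_sub (hj : 1 ≤ j) (hjk : j + k ≤ e) (t : ℕ) :
    sallyLevelMin e k j (2 * t + 1 + 1) - (2 * t + 1) * (e + j - 1) - 1 =
      k - t * (e + j - 2 - k) := by
  have hstep : t * (e + j + k) + t * (e + j - 2 - k) = 2 * t * (e + j - 1) := by
    rw [← mul_add, show e + j + k + (e + j - 2 - k) = 2 * (e + j - 1) by omega]
    ring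
  rw [show 2 * t + 1 + 1 = 2 * (t + 1) by ring, sallyLevelMin_two_mul]
  simp only [add_mul, one_mul]
  omega

theorem sallyLevelMin_succ_le (hj : 1 ≤ j) (hjk : j + k ≤ e) {n : ℕ}
    (hn : e - 1 ≤ n * (e + j - 2 - k)) {m : ℕ} (hm : 2 * n ≤ m) :
    sallyLevelMin e k j (m + 1) ≤ m * (e + j - 1) + 1 := by
  obtain ⟨t, rfl | rfl⟩ := Nat.even_or_odd' m
  · have := Nat.mul_le_mul_right (e + j - 2 - k) (show n ≤ t by omega)
    have := sallyLevelMin_two_mul_add_one_sub hj hjk t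
    omega
  · have := Nat.mul_le_mul_right (e + j - 2 - k) (show n ≤ t by omega)
    have := sallyLevelMin_two_mul_add_two_sub hj hjk t
    omega

theorem sum_sally_gap_sizes (hj : 1 ≤ j) (hjk : j + k ≤ e) {n : ℕ}
    (hn : (n - 1) * (e + j - 2 - k) < k) :
    ((∑ m ∈ Finset.range (2 * n),
        (sallyLevelMin e k j (m + 1) - m * (e + j - 1) - 1) : ℕ) : ℤ) =
      n * (e - 1 + k) - n * (n - 1) * (e + j - 2 - k) := by
  induction n with
  | zero => simp
  | succ n ih =>
    have hnk : n * (e + j - 2 - k) < k := by simpa using hn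
    rw [show 2 * (n + 1) = 2 * n + 1 + 1 by ring, Finset.sum_range_succ, Finset.sum_range_succ,
      sallyLevelMin_two_mul_add_one_sub hj hjk, sallyLevelMin_two_mul_add_two_sub hj hjk]
    push_cast [ih ((Nat.mul_le_mul_right _ (Nat.sub_le n 1)).trans_lt hnk),
      Nat.cast_sub (show n * (e + j - 2 - k) ≤ e - 1 by omega), Nat.cast_sub hnk.le,
      Nat.cast_sub (show 1 ≤ e by omega), Nat.cast_sub (show k ≤ e + j - 2 by omega),
      Nat.cast_sub (show 2 ≤ e + j by omega)]
    ring

theorem frobeniusNumber_sally (hj : 1 ≤ j) (hjk : j + k ≤ e) {n : ℕ}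
    (hodd : (n - 1) * (e + j - 2 - k) < k) (heven : e - 1 ≤ n * (e + j - 2 - k)) :
    frobeniusNumber (sally e k j) = n * (e + j + k) - 1 := by
  obtain ⟨n, rfl⟩ : ∃ n', n = n' + 1 := by
    refine Nat.exists_eq_add_one.2 (Nat.pos_of_ne_zero ?_)
    rintro rfl
    simp only [zero_tsub, zero_mul, nonpos_iff_eq_zero] at hodd heven
    omega
  rw [Nat.add_sub_cancel] at hodd
  have hlast : (2 * n + 1) * (e + j - 1) + 1 < sallyLevelMin e k j (2 * n + 1 + 1) := by
    have := sallyLevelMin_two_mul_add_two_sub hj hjk n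
    omega
  rw [frobeniusNumber_eq (coe_sally_eq_iUnion_Icc hj hjk) monotone_sallyLevelMin
    mul_left_mono (fun x => ⟨x, Nat.le_mul_of_pos_right x (by omega)⟩) hlast
    (fun m hm => sallyLevelMin_succ_le hj hjk heven (by omega)),
    show 2 * n + 1 + 1 = 2 * (n + 1) by ring, sallyLevelMin_two_mul]

theorem genusOf_sally (hj : 1 ≤ j) (hjk : j + k ≤ e) {n : ℕ}
    (hodd : (n - 1) * (e + j - 2 - k) < k) (heven : e - 1 ≤ n * (e + j - 2 - k)) :
    (genusOf (sally e k j) : ℤ) = n * (e - 1 + k) - n * (n - 1) * (e + j - 2 - k) := by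
  rw [genusOf_eq_sum (coe_sally_eq_iUnion_Icc hj hjk) monotone_sallyLevelMin
    mul_left_mono (fun x => ⟨x, Nat.le_mul_of_pos_right x (by omega)⟩)
    (fun m => (sallyLevelMin_le hj hjk m).trans (Nat.le_succ _))
    (fun m hm => sallyLevelMin_succ_le hj hjk heven hm)]
  exact sum_sally_gap_sizes hj hjk hodd

end Sally

theorem sally_frobenius_genus_odd_level_general (e k j n : ℕ) (hj : 2 ≤ j)
    (hjk : j + k ≤ e - 1)
    (h1 : (n - 1) * (e - 2) + (n - 1) * j < n * k)
    (h2 : n * k ≤ (n - 1) * e + n * j - (2 * n - 1)) :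
    (frobeniusNumber (sally e k j) : ℤ) = n * e + n * j + n * k - 1 ∧
    (genusOf (sally e k j) : ℤ) =
      n ^ 2 * k - n * (n - 1) * j - (n - 1) ^ 2 * e + (n - 1) * (2 * n - 1) + e - 1 := by
  have hn : 1 ≤ n := Nat.pos_of_ne_zero (by rintro rfl; simp at h1)
  have hodd : (n - 1) * (e + j - 2 - k) < k := by
    have : (n - 1) * (e - 2) + (n - 1) * j = (n - 1) * (e + j - 2 - k) + (n - 1) * k := by
      rw [← mul_add, ← mul_add]
      congr 1
      omega
    have := Nat.sub_one_mul n k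
    omega
  have heven : e - 1 ≤ n * (e + j - 2 - k) := by
    have : n * (e + j - 2 - k) + n * k + 2 * n = n * e + n * j := by
      rw [← mul_add, mul_comm 2 n, ← mul_add, ← mul_add]
      congr 1
      omega
    have := Nat.sub_one_mul n e
    have := Nat.le_mul_of_pos_left e hn
    have := Nat.mul_le_mul_left n hj
    omega
  have hj1 : 1 ≤ j := by omega
  have hjk' : j + k ≤ e := by omega
  constructor
  · rw [frobeniusNumber_sally hj1 hjk' hodd heven,
      Nat.cast_sub (Nat.one_le_iff_ne_zero.2 (by positivity))]
    push_cast
    ring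
  · rw [genusOf_sally hj1 hjk' hodd heven]
    ring

theorem sally_frobenius_genus_odd_level (e k j n : ℕ) (hn : 2 ≤ n) (hj : 2 ≤ j)
    (hk : 0 < k) (he : 0 < e) (hjk : j + k ≤ e - 1)
    (h1 : (n - 1) * (e - 2) + (n - 1) * j < n * k)
    (h2 : n * k ≤ (n - 1) * e + n * j - (2 * n - 1)) :
    (frobeniusNumber (sally e k j) : ℤ) = n * e + n * j + n * k - 1 ∧
    (genusOf (sally e k j) : ℤ) =
      n ^ 2 * k - n * (n - 1) * j - (n - 1) ^ 2 * e + (n - 1) * (2 * n - 1) + e - 1 :=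
  sally_frobenius_genus_odd_level_general e k j n hj hjk h1 h2
end

section
/- Let e, k, j, n be positive integers with n ≥ 1, j ≥ 2, j + k ≤ e - 1, satisfying (n-1)e + nj - (2n-1) < nk and (n+1)k ≤ ne + nj - 2n. Then the Frobenius number of S_k^e(j) is (n+1)e + nj + nk - 1 and its genus is n(n+1)k - n²j - n(n-1)e + n(2n-1) + e - 1. -/
set_option maxHeartbeats 1000000


namespace SallyProof

/-- start of covered region `i` (one past the end of gap block `i`). -/
def rS (e k j i : ℕ) : ℕ := ((i+1)/2) * (e+j+k) + (i+1-2*((i+1)/2)) * e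

lemma rS_eq (e k j i : ℕ) :
    ∃ q r, i + 1 = 2*q + r ∧ r ≤ 1 ∧ rS e k j i = q*(e+j+k) + r*e :=
  ⟨(i+1)/2, i+1-2*((i+1)/2), by omega, by omega, rfl⟩

lemma rS_odd (e k j t : ℕ) : rS e k j (2*t+1) = (t+1)*(e+j+k) := by
  unfold rS
  have h : (2*t+1+1)/2 = t+1 := by omega
  rw [h]
  have h2 : 2*t+1+1-2*(t+1) = 0 := by omega
  rw [h2]; ring

lemma rS_even (e k j t : ℕ) : rS e k j (2*t) = t*(e+j+k) + e := by
  unfold rS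
  have h : (2*t+1)/2 = t := by omega
  rw [h]
  have h2 : 2*t+1-2*t = 1 := by omega
  rw [h2]; ring

lemma rS_zero (e k j : ℕ) : rS e k j 0 = e := by
  have := rS_even e k j 0; simpa using this

lemma rS_mono (e k j : ℕ) : Monotone (rS e k j) := by
  apply monotone_nat_of_le_succ
  intro i
  rcases Nat.even_or_odd i with h | h
  · obtain ⟨t, ht⟩ := h
    have hi : i = 2*t := by omega
    subst hi
    rw [rS_even, rS_odd]
    have h1 : (t+1)*(e+j+k) = t*(e+j+k) + (e+j+k) := by ring
    rw [h1]
    have : e ≤ e + j + k := by omega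
    linarith
  · obtain ⟨t, ht⟩ := h
    subst ht
    have h2 : 2*t+1+1 = 2*(t+1) := by ring
    rw [rS_odd, h2, rS_even]
    linarith

/-- The covering-pairs set. -/
def covSet (e k j : ℕ) : Set ℕ :=
  {x | ∃ a b : ℕ, a*(e+j+k) + b*e ≤ x ∧
      (x:ℤ) ≤ (a:ℤ)*(2*(e:ℤ)-1) + (b:ℤ)*((e:ℤ)+(j:ℤ)-1)}

def covM (e k j : ℕ) : AddSubmonoid ℕ where
  carrier := covSet e k j
  zero_mem' := ⟨0, 0, by simp, by simp⟩
  add_mem' := by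
    rintro x y ⟨a1, b1, l1, u1⟩ ⟨a2, b2, l2, u2⟩
    refine ⟨a1+a2, b1+b2, ?_, ?_⟩
    · have h : (a1+a2)*(e+j+k) + (b1+b2)*e
          = (a1*(e+j+k) + b1*e) + (a2*(e+j+k) + b2*e) := by ring
      rw [h]; omega
    · push_cast
      nlinarith [u1, u2]

lemma mem_cov (e k j : ℕ) (x : ℕ) (hx : x ∈ sally e k j) : x ∈ covSet e k j := by
  have hle : sally e k j ≤ covM e k j := by
    rw [sally]
    apply AddSubmonoid.closure_le.mpr
    rintro g (hg | hg)
    · obtain ⟨h1, h2⟩ := hg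
      exact ⟨0, 1, by simpa using h1, by push_cast; omega⟩
    · obtain ⟨h1, h2⟩ := hg
      exact ⟨1, 0, by simpa using h1, by push_cast; omega⟩
  exact hle hx

lemma cov_mem (e k j : ℕ) (he : 1 ≤ e) (hj : 1 ≤ j) (hjk : j + k + 1 ≤ e) :
    ∀ (c a b x : ℕ), a + b ≤ c → a*(e+j+k) + b*e ≤ x →
      (x:ℤ) ≤ (a:ℤ)*(2*(e:ℤ)-1) + (b:ℤ)*((e:ℤ)+(j:ℤ)-1) → x ∈ sally e k j := by
  intro c
  induction c with
  | zero =>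
    intro a b x hab hlo hhi
    obtain rfl : a = 0 := by omega
    obtain rfl : b = 0 := by omega
    simp only [Nat.cast_zero, zero_mul, add_zero] at hhi
    obtain rfl : x = 0 := by omega
    exact zero_mem _
  | succ c ih =>
    intro a b x hab hlo hhi
    rcases a with _ | a
    · rcases b with _ | b
      · simp only [Nat.cast_zero, zero_mul, add_zero] at hhi
        obtain rfl : x = 0 := by omega
        exact zero_mem _
      · -- peel a small generator from [e, e+j-1]
        have hlo' : b*e + e ≤ x := by
          have h : (b+1)*e = b*e + e := by ring
          simp only [Nat.zero_eq, zero_mul, zero_add] at hlo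
          omega
        have hb0 : (0:ℤ) ≤ (b:ℤ) := by positivity
        by_cases hc : x ≤ b*e + (e+j-1)
        · have hymem : b*e ∈ sally e k j := by
            apply ih 0 b (b*e) (by omega) (by simp)
            push_cast
            nlinarith [mul_nonneg hb0 (show (0:ℤ) ≤ (j:ℤ)-1 by
              have : (1:ℤ) ≤ (j:ℤ) := by exact_mod_cast hj
              linarith)]
          have hgmem : x - b*e ∈ sally e k j := by
            apply AddSubmonoid.subset_closure
            left
            exact ⟨by omega, by omega⟩
          have h := add_mem hymem hgmem
          have hx : b*e + (x - b*e) = x := by omega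
          rwa [hx] at h
        · have hxge : e + j - 1 ≤ x := by omega
          have hymem : x - (e+j-1) ∈ sally e k j := by
            apply ih 0 b (x - (e+j-1)) (by omega)
            · simp only [zero_mul, zero_add]
              omega
            · have hcast : ((x - (e+j-1) : ℕ) : ℤ) = (x:ℤ) - ((e:ℤ)+(j:ℤ)-1) := by
                omega
              rw [hcast]
              push_cast at hhi ⊢
              nlinarith [hhi]
          have hgmem : e+j-1 ∈ sally e k j := by
            apply AddSubmonoid.subset_closure
            left
            exact ⟨by omega, by omega⟩
          have h := add_mem hymem hgmem
          have hx : (x - (e+j-1)) + (e+j-1) = x := by omega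
          rwa [hx] at h
    · -- peel a large generator from [e+j+k, 2e-1]
      have hlo' : a*(e+j+k) + b*e + (e+j+k) ≤ x := by
        have h : (a+1)*(e+j+k) = a*(e+j+k) + (e+j+k) := by ring
        omega
      have ha0 : (0:ℤ) ≤ (a:ℤ) := by positivity
      have hb0 : (0:ℤ) ≤ (b:ℤ) := by positivity
      have hjz : (1:ℤ) ≤ (j:ℤ) := by exact_mod_cast hj
      have hjkz : (j:ℤ) + (k:ℤ) + 1 ≤ (e:ℤ) := by exact_mod_cast hjk
      by_cases hc : x ≤ a*(e+j+k) + b*e + (2*e-1)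
      · have hymem : a*(e+j+k) + b*e ∈ sally e k j := by
          apply ih a b _ (by omega) le_rfl
          push_cast
          nlinarith [mul_nonneg ha0 (show (0:ℤ) ≤ (e:ℤ)-(j:ℤ)-(k:ℤ)-1 by linarith),
            mul_nonneg hb0 (show (0:ℤ) ≤ (j:ℤ)-1 by linarith)]
        have hgmem : x - (a*(e+j+k) + b*e) ∈ sally e k j := by
          apply AddSubmonoid.subset_closure
          right
          exact ⟨by omega, by omega⟩
        have h := add_mem hymem hgmem
        have hx : (a*(e+j+k) + b*e) + (x - (a*(e+j+k) + b*e)) = x := by omega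
        rwa [hx] at h
      · have hxge : 2*e - 1 ≤ x := by omega
        have hymem : x - (2*e-1) ∈ sally e k j := by
          apply ih a b _ (by omega)
          · omega
          · have hcast : ((x - (2*e-1) : ℕ) : ℤ) = (x:ℤ) - (2*(e:ℤ)-1) := by omega
            rw [hcast]
            push_cast at hhi ⊢
            nlinarith [hhi]
        have hgmem : 2*e-1 ∈ sally e k j := by
          apply AddSubmonoid.subset_closure
          right
          exact ⟨by omega, by omega⟩
        have h := add_mem hymem hgmem
        have hx : (x - (2*e-1)) + (2*e-1) = x := by omega
        rwa [hx] at h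

lemma mem_iff (e k j : ℕ) (he : 1 ≤ e) (hj : 1 ≤ j) (hjk : j + k + 1 ≤ e) (x : ℕ) :
    x ∈ sally e k j ↔ x ∈ covSet e k j := by
  constructor
  · exact mem_cov e k j x
  · rintro ⟨a, b, hlo, hhi⟩
    exact cov_mem e k j he hj hjk (a+b) a b x le_rfl hlo hhi

/-- Points in gap blocks are not covered. -/
lemma gap_block (e k j : ℕ) (he : 1 ≤ e) (hj : 1 ≤ j) (hjk : j + k + 1 ≤ e)
    (i x a b : ℕ) (hL : i*(e+j-1)+1 ≤ x) (hU : x < rS e k j i)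
    (hlo : a*(e+j+k) + b*e ≤ x)
    (hhi : (x:ℤ) ≤ (a:ℤ)*(2*(e:ℤ)-1) + (b:ℤ)*((e:ℤ)+(j:ℤ)-1)) : False := by
  obtain ⟨q, r, hqr, hr1, hrS⟩ := rS_eq e k j i
  rw [hrS] at hU
  have ha0 : (0:ℤ) ≤ (a:ℤ) := by positivity
  have hb0 : (0:ℤ) ≤ (b:ℤ) := by positivity
  have hjz : (1:ℤ) ≤ (j:ℤ) := by exact_mod_cast hj
  have hez : (1:ℤ) ≤ (e:ℤ) := by exact_mod_cast he
  have hjkz : (j:ℤ) + (k:ℤ) + 1 ≤ (e:ℤ) := by exact_mod_cast hjk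
  have hkz : (0:ℤ) ≤ (k:ℤ) := by positivity
  have hloz : (a:ℤ)*((e:ℤ)+j+k) + (b:ℤ)*e ≤ (x:ℤ) := by exact_mod_cast hlo
  have hUz : (x:ℤ) < (q:ℤ)*((e:ℤ)+j+k) + (r:ℤ)*e := by exact_mod_cast hU
  have hr0 : (0:ℤ) ≤ (r:ℤ) := by positivity
  have hr1z : (r:ℤ) ≤ 1 := by exact_mod_cast hr1
  have haq : a < q + r := by
    have hre : (r:ℤ)*(e:ℤ) ≤ (r:ℤ)*((e:ℤ)+j+k) :=
      mul_le_mul_of_nonneg_left (by linarith) hr0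
    have hax : (a:ℤ)*((e:ℤ)+j+k) < ((q:ℤ)+(r:ℤ))*((e:ℤ)+j+k) := by
      have hexp : ((q:ℤ)+(r:ℤ))*((e:ℤ)+j+k)
          = (q:ℤ)*((e:ℤ)+j+k) + (r:ℤ)*((e:ℤ)+j+k) := by ring
      rw [hexp]
      have hbe : (0:ℤ) ≤ (b:ℤ)*e := by positivity
      linarith
    have := lt_of_mul_lt_mul_right hax (by positivity : (0:ℤ) ≤ (e:ℤ)+j+k)
    exact_mod_cast this
  have haq2 : a ≤ q := by omega
  set c : ℕ := q - a with hc
  have hqc : q = a + c := by omega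
  have hcz : (q:ℤ) = (a:ℤ) + (c:ℤ) := by exact_mod_cast hqc
  have hc0 : (0:ℤ) ≤ (c:ℤ) := by positivity
  have hb : (b:ℤ)*(e:ℤ) < ((2*(c:ℤ)+(r:ℤ)))*(e:ℤ) := by
    have hqE : (q:ℤ)*((e:ℤ)+j+k) = (a:ℤ)*((e:ℤ)+j+k) + (c:ℤ)*((e:ℤ)+j+k) := by
      rw [hcz]; ring
    have h1 : (b:ℤ)*e < (c:ℤ)*((e:ℤ)+j+k) + (r:ℤ)*e := by linarith
    have h2 : (c:ℤ)*((e:ℤ)+j+k) ≤ (c:ℤ)*(2*(e:ℤ)-1) :=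
      mul_le_mul_of_nonneg_left (by linarith) hc0
    have h3 : (c:ℤ)*(2*(e:ℤ)-1) = 2*((c:ℤ)*e) - c := by ring
    have h4 : ((2*(c:ℤ)+(r:ℤ)))*(e:ℤ) = 2*((c:ℤ)*e) + (r:ℤ)*e := by ring
    linarith
  have hbr : (b:ℤ) < 2*(c:ℤ)+r := lt_of_mul_lt_mul_right hb (by positivity)
  have hbrn : b < 2*c + r := by exact_mod_cast hbr
  have hab : 2*a + b ≤ i := by omega
  have habz : 2*(a:ℤ) + b ≤ (i:ℤ) := by exact_mod_cast hab
  have hLz : (i:ℤ)*((e:ℤ)+j-1) + 1 ≤ (x:ℤ) := by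
    have hcast : ((i*(e+j-1)+1 : ℕ) : ℤ) = (i:ℤ)*((e:ℤ)+j-1)+1 := by
      push_cast [show ((e+j-1:ℕ):ℤ) = (e:ℤ)+j-1 by omega]
      ring
    calc (i:ℤ)*((e:ℤ)+j-1)+1 = ((i*(e+j-1)+1 : ℕ) : ℤ) := hcast.symm
      _ ≤ (x:ℤ) := by exact_mod_cast hL
  have hint1 : (0:ℤ) ≤ (a:ℤ)*(2*(j:ℤ)-1) := mul_nonneg ha0 (by linarith)
  have hint2 : (0:ℤ) ≤ ((i:ℤ) - 2*a - b)*((e:ℤ)+j-1) :=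
    mul_nonneg (by linarith) (by linarith)
  linarith [hint1, hint2, hhi, hLz, habz]

/-- Generic chain lemma. -/
lemma chain (l : ℕ → ℕ) (u : ℕ → ℤ) :
    ∀ (T x : ℕ), l 0 ≤ x → (x:ℤ) ≤ u T →
      (∀ s, s < T → (l (s+1) : ℤ) ≤ u s + 1) →
      ∃ s, s ≤ T ∧ l s ≤ x ∧ (x:ℤ) ≤ u s := by
  intro T
  induction T with
  | zero => intro x h0 hT _; exact ⟨0, le_refl 0, h0, hT⟩
  | succ T ih =>
    intro x h0 hT hc
    by_cases hx : (x:ℤ) ≤ u T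
    · obtain ⟨s, hs, h⟩ := ih x h0 hx (fun s hs => hc s (by omega))
      exact ⟨s, by omega, h⟩
    · push_neg at hx
      refine ⟨T+1, le_refl _, ?_, hT⟩
      have h := hc T (by omega)
      have h2 : (l (T+1) : ℤ) ≤ (x:ℤ) := by linarith
      exact_mod_cast h2

/-- Every point of a covered region is covered. -/
lemma region_cov (e k j : ℕ) (he : 1 ≤ e) (hj : 1 ≤ j) (hjk : j + k + 1 ≤ e)
    (i x : ℕ) (h1 : rS e k j i ≤ x) (h2 : (x:ℤ) ≤ ((i:ℤ)+1)*((e:ℤ)+(j:ℤ)-1)) :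
    x ∈ covSet e k j := by
  obtain ⟨q, r, hqr, hr1, hrS⟩ := rS_eq e k j i
  have hjz : (1:ℤ) ≤ (j:ℤ) := by exact_mod_cast hj
  have hez : (1:ℤ) ≤ (e:ℤ) := by exact_mod_cast he
  have hjkz : (j:ℤ) + (k:ℤ) + 1 ≤ (e:ℤ) := by exact_mod_cast hjk
  have hiz : (i:ℤ) + 1 = 2*(q:ℤ) + (r:ℤ) := by exact_mod_cast hqr
  obtain ⟨s, hsq, hls, hus⟩ := chain
    (fun s => (q - s)*(e+j+k) + (r + 2*s)*e)
    (fun s => ((q:ℤ) - s)*(2*(e:ℤ)-1) + ((r:ℤ) + 2*s)*((e:ℤ)+(j:ℤ)-1))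
    q x
    (by
      show (q - 0)*(e+j+k) + (r + 2*0)*e ≤ x
      have e0 : (q - 0)*(e+j+k) + (r + 2*0)*e = q*(e+j+k) + r*e := by norm_num
      rw [e0, ← hrS]; exact h1)
    (by
      show (x:ℤ) ≤ ((q:ℤ) - (q:ℕ))*(2*(e:ℤ)-1) + ((r:ℤ) + 2*(q:ℕ))*((e:ℤ)+(j:ℤ)-1)
      have e1 : ((q:ℤ) - (q:ℕ))*(2*(e:ℤ)-1) + ((r:ℤ) + 2*(q:ℕ))*((e:ℤ)+(j:ℤ)-1)
          = ((i:ℤ)+1)*((e:ℤ)+(j:ℤ)-1) := by rw [hiz]; ring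
      rw [e1]; exact h2)
    (by
      intro s hs
      show (((q - (s+1))*(e+j+k) + (r + 2*(s+1))*e : ℕ) : ℤ)
          ≤ ((q:ℤ) - (s:ℕ))*(2*(e:ℤ)-1) + ((r:ℤ) + 2*(s:ℕ))*((e:ℤ)+(j:ℤ)-1) + 1
      have hsz : (s:ℤ) + 1 ≤ (q:ℤ) := by exact_mod_cast hs
      have hcast : ((q - (s+1) : ℕ) : ℤ) = (q:ℤ) - s - 1 := by omega
      push_cast [hcast]
      have hC : (0:ℤ) ≤ (q:ℤ) - s - 1 := by linarith
      have hβ : (0:ℤ) ≤ (r:ℤ) + 2*s := by positivity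
      nlinarith [mul_nonneg hC (show (0:ℤ) ≤ (e:ℤ)-1-j-k by linarith),
        mul_nonneg hβ (show (0:ℤ) ≤ (j:ℤ)-1 by linarith)])
  have hls' : (q - s)*(e+j+k) + (r + 2*s)*e ≤ x := hls
  have hus' : (x:ℤ) ≤ ((q:ℤ) - (s:ℕ))*(2*(e:ℤ)-1) + ((r:ℤ) + 2*(s:ℕ))*((e:ℤ)+(j:ℤ)-1) := hus
  refine ⟨q - s, r + 2*s, hls', ?_⟩
  have hcast : ((q - s : ℕ) : ℤ) = (q:ℤ) - (s:ℤ) := by omega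
  rw [hcast]
  push_cast
  push_cast at hus'
  linarith

/-- Beyond level 2n, regions merge: region start comes right after previous region. -/
lemma merge (e k j n : ℕ) (he : 1 ≤ e) (hj : 1 ≤ j) (hjk : j + k + 1 ≤ e)
    (h2' : ((n:ℤ)+1)*(k:ℤ) ≤ (n:ℤ)*(e:ℤ) + (n:ℤ)*(j:ℤ) - 2*(n:ℤ)) :
    ∀ i, 2*n+1 ≤ i → rS e k j i ≤ i*(e+j-1)+1 := by
  intro i hi
  obtain ⟨q, r, hqr, hr1, hrS⟩ := rS_eq e k j i
  have hq : n + 1 ≤ q := by omega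
  obtain ⟨d, hd⟩ : ∃ d, q = n + 1 + d := ⟨q - (n+1), by omega⟩
  subst hd
  rw [hrS]
  have hjz : (1:ℤ) ≤ (j:ℤ) := by exact_mod_cast hj
  have hez : (1:ℤ) ≤ (e:ℤ) := by exact_mod_cast he
  have hjkz : (j:ℤ) + (k:ℤ) + 1 ≤ (e:ℤ) := by exact_mod_cast hjk
  have hd0 : (0:ℤ) ≤ (d:ℤ) := by positivity
  have hr0 : (0:ℤ) ≤ (r:ℤ) := by positivity
  have hiz : (i:ℤ) = 2*((n:ℤ)+1+d) + r - 1 := by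
    have : (i:ℤ) + 1 = 2*(((n+1+d : ℕ)):ℤ) + (r:ℤ) := by exact_mod_cast hqr
    push_cast at this; linarith
  have key : (((n:ℤ)+1+d))*((e:ℤ)+j+k) + (r:ℤ)*e
      ≤ (i:ℤ)*((e:ℤ)+j-1) + 1 := by
    rw [hiz]
    nlinarith [mul_nonneg hd0 (show (0:ℤ) ≤ (e:ℤ)+j-k-2 by linarith),
      mul_nonneg hr0 (show (0:ℤ) ≤ (j:ℤ)-1 by linarith), h2']
  have hcast1 : (((n+1+d)*(e+j+k) + r*e : ℕ) : ℤ)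
      = (((n:ℤ)+1+d))*((e:ℤ)+j+k) + (r:ℤ)*e := by push_cast; ring
  have hcast2 : ((i*(e+j-1)+1 : ℕ) : ℤ) = (i:ℤ)*((e:ℤ)+j-1)+1 := by
    push_cast [show ((e+j-1:ℕ):ℤ) = (e:ℤ)+j-1 by omega]; ring
  have : (((n+1+d)*(e+j+k) + r*e : ℕ) : ℤ) ≤ ((i*(e+j-1)+1 : ℕ) : ℤ) := by
    rw [hcast1, hcast2]; exact key
  exact_mod_cast this

/-- Covered regions are nonempty. -/
lemma region_nonempty (e k j : ℕ) (he : 1 ≤ e) (hj : 1 ≤ j) (hjk : j + k + 1 ≤ e)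
    (i : ℕ) : rS e k j i ≤ (i+1)*(e+j-1) := by
  obtain ⟨q, r, hqr, hr1, hrS⟩ := rS_eq e k j i
  rw [hrS]
  have hjz : (1:ℤ) ≤ (j:ℤ) := by exact_mod_cast hj
  have hez : (1:ℤ) ≤ (e:ℤ) := by exact_mod_cast he
  have hjkz : (j:ℤ) + (k:ℤ) + 1 ≤ (e:ℤ) := by exact_mod_cast hjk
  have hq0 : (0:ℤ) ≤ (q:ℤ) := by positivity
  have hr0 : (0:ℤ) ≤ (r:ℤ) := by positivity
  have hiz : (i:ℤ) + 1 = 2*(q:ℤ) + (r:ℤ) := by exact_mod_cast hqr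
  have key : (q:ℤ)*((e:ℤ)+j+k) + (r:ℤ)*e ≤ ((i:ℤ)+1)*((e:ℤ)+j-1) := by
    rw [hiz]
    nlinarith [mul_nonneg hq0 (show (0:ℤ) ≤ (e:ℤ)-j-k-1 by linarith),
      mul_nonneg hq0 (show (0:ℤ) ≤ 2*(j:ℤ)-1 by linarith),
      mul_nonneg hr0 (show (0:ℤ) ≤ (j:ℤ)-1 by linarith)]
  have hcast1 : ((q*(e+j+k) + r*e : ℕ) : ℤ) = (q:ℤ)*((e:ℤ)+j+k) + (r:ℤ)*e := by
    push_cast; ring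
  have hcast2 : (((i+1)*(e+j-1) : ℕ) : ℤ) = ((i:ℤ)+1)*((e:ℤ)+j-1) := by
    push_cast [show ((e+j-1:ℕ):ℤ) = (e:ℤ)+j-1 by omega]; ring
  have : ((q*(e+j+k) + r*e : ℕ) : ℤ) ≤ (((i+1)*(e+j-1) : ℕ) : ℤ) := by
    rw [hcast1, hcast2]; exact key
  exact_mod_cast this

/-- The claimed gap set. -/
def GG (e k j n : ℕ) : Finset ℕ :=
  Finset.Ico 1 e ∪ (Finset.range (2*n)).biUnion
    (fun i => Finset.Ico ((i+1)*(e+j-1)+1) (rS e k j (i+1)))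

lemma classify (e k j n : ℕ) (he : 1 ≤ e) (hj : 1 ≤ j) (hjk : j + k + 1 ≤ e)
    (hmerge : ∀ i, 2*n+1 ≤ i → rS e k j i ≤ i*(e+j-1)+1) :
    ∀ (I x : ℕ), e ≤ x → (x:ℤ) ≤ ((I:ℤ)+1)*((e:ℤ)+(j:ℤ)-1) →
      x ∈ GG e k j n ∨ ∃ i, rS e k j i ≤ x ∧ (x:ℤ) ≤ ((i:ℤ)+1)*((e:ℤ)+(j:ℤ)-1) := by
  intro I
  induction I with
  | zero =>
    intro x hex hx
    right
    exact ⟨0, by rw [rS_zero]; exact hex, by exact_mod_cast hx⟩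
  | succ I ih =>
    intro x hex hx
    by_cases hxI : (x:ℤ) ≤ ((I:ℤ)+1)*((e:ℤ)+(j:ℤ)-1)
    · exact ih x hex hxI
    · push_neg at hxI
      have hxL : (I+1)*(e+j-1)+1 ≤ x := by
        have hcast : (((I+1)*(e+j-1) : ℕ) : ℤ) = ((I:ℤ)+1)*((e:ℤ)+j-1) := by
          push_cast [show ((e+j-1:ℕ):ℤ) = (e:ℤ)+j-1 by omega]; ring
        have : (((I+1)*(e+j-1) : ℕ) : ℤ) < (x:ℤ) := by rw [hcast]; exact hxI
        exact_mod_cast this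
      by_cases hblk : x < rS e k j (I+1)
      · by_cases hI2n : I+1 ≤ 2*n
        · left
          apply Finset.mem_union_right
          apply Finset.mem_biUnion.mpr
          exact ⟨I, Finset.mem_range.mpr (by omega),
            Finset.mem_Ico.mpr ⟨hxL, hblk⟩⟩
        · exfalso
          have := hmerge (I+1) (by omega)
          omega
      · push_neg at hblk
        right
        refine ⟨I+1, hblk, ?_⟩
        push_cast
        push_cast at hx
        linarith

lemma gaps_eq (e k j n : ℕ) (he : 1 ≤ e) (hj : 2 ≤ j) (hjk : j + k + 1 ≤ e)
    (h2' : ((n:ℤ)+1)*(k:ℤ) ≤ (n:ℤ)*(e:ℤ) + (n:ℤ)*(j:ℤ) - 2*(n:ℤ)) :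
    gapsOf (sally e k j) = ↑(GG e k j n) := by
  have hj1 : 1 ≤ j := by omega
  have hmerge := merge e k j n he hj1 hjk h2'
  ext x
  simp only [gapsOf, Set.mem_setOf_eq, mem_iff e k j he hj1 hjk x]
  constructor
  · -- not covered → in GG
    intro hnc
    by_cases hx0 : x = 0
    · exfalso
      exact hnc ⟨0, 0, by omega, by simp [hx0]⟩
    by_cases hxe : x < e
    · apply Finset.mem_coe.mpr
      apply Finset.mem_union_left
      exact Finset.mem_Ico.mpr ⟨by omega, hxe⟩
    push_neg at hxe
    have hbound : (x:ℤ) ≤ ((x:ℤ)+1)*((e:ℤ)+(j:ℤ)-1) := by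
      have h1 : ((x:ℤ)+1)*1 ≤ ((x:ℤ)+1)*((e:ℤ)+(j:ℤ)-1) := by
        apply mul_le_mul_of_nonneg_left
        · have : (2:ℤ) ≤ (j:ℤ) := by exact_mod_cast hj
          have : (1:ℤ) ≤ (e:ℤ) := by exact_mod_cast he
          omega
        · positivity
      linarith
    rcases classify e k j n he hj1 hjk hmerge x x hxe hbound with h | ⟨i, hi1, hi2⟩
    · exact Finset.mem_coe.mpr h
    · exact absurd (region_cov e k j he hj1 hjk i x hi1 hi2) hnc
  · -- in GG → not covered
    intro hG hcov
    obtain ⟨a, b, hlo, hhi⟩ := hcov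
    have hG' := Finset.mem_coe.mp hG
    rcases Finset.mem_union.mp hG' with h | h
    · obtain ⟨hx1, hxe⟩ := Finset.mem_Ico.mp h
      rcases Nat.eq_zero_or_pos (a + b) with hab | hab
      · have ha : a = 0 := by omega
        have hb : b = 0 := by omega
        subst ha; subst hb
        simp only [Nat.cast_zero, zero_mul, add_zero] at hhi
        omega
      · have h1 : a*e ≤ a*(e+j+k) := Nat.mul_le_mul_left a (by omega)
        have h2 : (a+b)*e = a*e + b*e := by ring
        have h3 : 1*e ≤ (a+b)*e := Nat.mul_le_mul_right e hab
        have : e ≤ a*(e+j+k) + b*e := by linarith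
        omega
    · obtain ⟨i, hir, hIco⟩ := Finset.mem_biUnion.mp h
      obtain ⟨hL, hU⟩ := Finset.mem_Ico.mp hIco
      exact gap_block e k j he hj1 hjk (i+1) x a b hL hU hlo hhi

/-- Gap blocks (for indices 1..2n) are nonempty, from h1. -/
lemma block_nonempty (e k j n : ℕ) (he : 1 ≤ e) (hj : 2 ≤ j) (hjk : j + k + 1 ≤ e)
    (h1' : ((n:ℤ)-1)*(e:ℤ) + (n:ℤ)*(j:ℤ) + 2 ≤ (n:ℤ)*(k:ℤ) + 2*(n:ℤ)) :
    ∀ i, i < 2*n → (i+1)*(e+j-1)+1 < rS e k j (i+1) := by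
  intro i hi
  have hjz : (2:ℤ) ≤ (j:ℤ) := by exact_mod_cast hj
  have hez : (1:ℤ) ≤ (e:ℤ) := by exact_mod_cast he
  have hjkz : (j:ℤ) + (k:ℤ) + 1 ≤ (e:ℤ) := by exact_mod_cast hjk
  have hcastE : ((e+j-1 : ℕ):ℤ) = (e:ℤ)+j-1 := by omega
  rcases Nat.even_or_odd i with h | h
  · obtain ⟨s, hs⟩ := h
    have hi2 : i = 2*s := by omega
    subst hi2
    rw [rS_odd]
    have hsn : (s:ℤ) + 1 ≤ (n:ℤ) := by
      have : s + 1 ≤ n := by omega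
      exact_mod_cast this
    have key : ((2*(s:ℤ)+1))*((e:ℤ)+j-1)+1 < ((s:ℤ)+1)*((e:ℤ)+j+k) := by
      nlinarith [mul_nonneg (show (0:ℤ) ≤ (n:ℤ)-s-1 by linarith)
        (show (0:ℤ) ≤ (e:ℤ)+j-k-2 by linarith), h1']
    have hc1 : (((2*s+1)*(e+j-1)+1 : ℕ) : ℤ) = ((2*(s:ℤ)+1))*((e:ℤ)+j-1)+1 := by
      push_cast [hcastE]; ring
    have hc2 : (((s+1)*(e+j+k) : ℕ) : ℤ) = ((s:ℤ)+1)*((e:ℤ)+j+k) := by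
      push_cast; ring
    have : (((2*s+1)*(e+j-1)+1 : ℕ) : ℤ) < (((s+1)*(e+j+k) : ℕ) : ℤ) := by
      rw [hc1, hc2]; exact key
    exact_mod_cast this
  · obtain ⟨s, hs⟩ := h
    subst hs
    rw [show 2*s+1+1 = 2*(s+1) by ring, rS_even]
    have hsn : (s:ℤ) + 1 ≤ (n:ℤ) := by
      have : s + 1 ≤ n := by omega
      exact_mod_cast this
    have key : ((2*(s:ℤ)+2))*((e:ℤ)+j-1)+1 < ((s:ℤ)+1)*((e:ℤ)+j+k) + e := by
      nlinarith [mul_nonneg (show (0:ℤ) ≤ (n:ℤ)-s-1 by linarith)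
        (show (0:ℤ) ≤ (e:ℤ)+j-k-2 by linarith), h1']
    have hc1 : (((2*s+1+1)*(e+j-1)+1 : ℕ) : ℤ) = ((2*(s:ℤ)+2))*((e:ℤ)+j-1)+1 := by
      push_cast [hcastE]; ring
    have hc2 : (((s+1)*(e+j+k)+e : ℕ) : ℤ) = ((s:ℤ)+1)*((e:ℤ)+j+k) + e := by
      push_cast; ring
    have : (((2*s+1+1)*(e+j-1)+1 : ℕ) : ℤ) < (((s+1)*(e+j+k)+e : ℕ) : ℤ) := by
      rw [hc1, hc2]; exact key
    exact_mod_cast this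

/-- The formal sum of block sizes. -/
lemma sum_blocks (e k j : ℕ) : ∀ M : ℕ,
    ∑ i ∈ Finset.range (2*M),
      ((rS e k j (i+1) : ℤ) - ((i:ℤ)+1)*((e:ℤ)+(j:ℤ)-1) - 1)
    = (M:ℤ)*((M:ℤ)+1)*k - (M:ℤ)*((M:ℤ)-1)*e - (M:ℤ)^2*j + 2*(M:ℤ)^2 - M := by
  intro M
  induction M with
  | zero => simp
  | succ M ih =>
    have h2M : 2*(M+1) = 2*M+1+1 := by ring
    rw [h2M, Finset.sum_range_succ, Finset.sum_range_succ, ih]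
    rw [rS_odd, show 2*M+1+1 = 2*(M+1) by ring, rS_even]
    push_cast
    ring

end SallyProof

open SallyProof

theorem sally_frobenius_genus_even_level (e k j n : ℕ) (hn : 1 ≤ n) (hj : 2 ≤ j)
    (hk : 0 < k) (he : 0 < e) (hjk : j + k ≤ e - 1)
    (h1 : (n - 1) * e + n * j - (2 * n - 1) < n * k)
    (h2 : (n + 1) * k ≤ n * e + n * j - 2 * n) :
    (frobeniusNumber (sally e k j) : ℤ) = (n + 1) * e + n * j + n * k - 1 ∧
    (genusOf (sally e k j) : ℤ) =
      n * (n + 1) * k - n ^ 2 * j - n * (n - 1) * e + n * (2 * n - 1) + e - 1 := by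
  obtain ⟨m, rfl⟩ : ∃ m, n = m + 1 := ⟨n - 1, by omega⟩
  have he1 : 1 ≤ e := he
  have hjk' : j + k + 1 ≤ e := by omega
  have hj1 : 1 ≤ j := by omega
  -- normalize h1 and h2 to ℤ
  have hjm : (m+1)*2 ≤ (m+1)*j := Nat.mul_le_mul_left (m+1) hj
  have hem : (m+1)*1 ≤ (m+1)*e := Nat.mul_le_mul_left (m+1) he1
  have hjm' : (m+1)*2 = 2*m+2 := by ring
  have hem' : (m+1)*1 = m+1 := by ring
  have h1n : m*e + (m+1)*j - (2*m+1) < (m+1)*k := by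
    have ha : m+1-1 = m := by omega
    have hb : 2*(m+1)-1 = 2*m+1 := by omega
    rwa [ha, hb] at h1
  have hle1 : 2*m+1 ≤ m*e + (m+1)*j := by
    have h0 : (0:ℕ) ≤ m*e := Nat.zero_le _
    linarith
  have h1z : (m:ℤ)*e + ((m:ℤ)+1)*j + 1 ≤ ((m:ℤ)+1)*k + (2*(m:ℤ)+1) := by
    zify [hle1] at h1n
    push_cast at h1n
    linarith
  have h2n : (m+1+1)*k ≤ (m+1)*e + (m+1)*j - (2*m+2) := by
    have hb : 2*(m+1) = 2*m+2 := by ring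
    rwa [hb] at h2
  have hle2 : 2*m+2 ≤ (m+1)*e + (m+1)*j := by linarith
  have h2z : ((m:ℤ)+2)*k ≤ ((m:ℤ)+1)*e + ((m:ℤ)+1)*j - (2*(m:ℤ)+2) := by
    zify [hle2] at h2n
    push_cast at h2n
    linarith
  -- the gap set
  have hgaps : gapsOf (sally e k j) = ↑(GG e k j (m+1)) := by
    apply gaps_eq e k j (m+1) he1 hj hjk'
    push_cast
    linarith
  have hblk : ∀ i, i < 2*(m+1) → (i+1)*(e+j-1)+1 < rS e k j (i+1) := by
    apply block_nonempty e k j (m+1) he1 hj hjk'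
    push_cast
    linarith
  have hX : 0 < (m+1)*(e+j+k) := Nat.mul_pos (by omega) (by omega)
  -- Frobenius number
  have hFmem : (m+1)*(e+j+k) + e - 1 ∈ GG e k j (m+1) := by
    apply Finset.mem_union_right
    apply Finset.mem_biUnion.mpr
    refine ⟨2*m+1, Finset.mem_range.mpr (by omega), Finset.mem_Ico.mpr ⟨?_, ?_⟩⟩
    · have h := hblk (2*m+1) (by omega)
      have hrs : rS e k j (2*m+1+1) = (m+1)*(e+j+k) + e := by
        rw [show 2*m+1+1 = 2*(m+1) by ring, rS_even]
      rw [hrs] at h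
      omega
    · have hrs : rS e k j (2*m+1+1) = (m+1)*(e+j+k) + e := by
        rw [show 2*m+1+1 = 2*(m+1) by ring, rS_even]
      rw [hrs]
      omega
  have hFub : ∀ x ∈ GG e k j (m+1), x ≤ (m+1)*(e+j+k) + e - 1 := by
    intro x hx
    rcases Finset.mem_union.mp hx with h | h
    · have h2 := (Finset.mem_Ico.mp h).2
      omega
    · obtain ⟨i, hir, hIco⟩ := Finset.mem_biUnion.mp h
      have hlt := (Finset.mem_Ico.mp hIco).2
      have hmono : rS e k j (i+1) ≤ rS e k j (2*(m+1)) := by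
        apply rS_mono
        have := Finset.mem_range.mp hir
        omega
      rw [rS_even] at hmono
      omega
  have hF : frobeniusNumber (sally e k j) = (m+1)*(e+j+k) + e - 1 := by
    rw [frobeniusNumber, hgaps]
    apply IsGreatest.csSup_eq
    exact ⟨Finset.mem_coe.mpr hFmem, fun x hx => hFub x (Finset.mem_coe.mp hx)⟩
  constructor
  · rw [hF]
    have hle : 1 ≤ (m+1)*(e+j+k) + e := by omega
    rw [Nat.cast_sub hle]
    push_cast
    ring
  · -- genus
    have hgen : genusOf (sally e k j) = (GG e k j (m+1)).card := by
      rw [genusOf, hgaps, Nat.card_coe_set_eq, Set.ncard_coe_finset]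
    have hdisj : Disjoint (Finset.Ico 1 e)
        ((Finset.range (2*(m+1))).biUnion
          (fun i => Finset.Ico ((i+1)*(e+j-1)+1) (rS e k j (i+1)))) := by
      rw [Finset.disjoint_left]
      intro y hy hyB
      obtain ⟨i, hi, hyI⟩ := Finset.mem_biUnion.mp hyB
      have h1' := (Finset.mem_Ico.mp hy).2
      have h2' := (Finset.mem_Ico.mp hyI).1
      have h3 : 1*(e+j-1) ≤ (i+1)*(e+j-1) := Nat.mul_le_mul_right _ (by omega)
      generalize hA : (i+1)*(e+j-1) = A at h2' h3
      omega
    have haux : ∀ i1 i2 : ℕ, i1 < i2 →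
        Disjoint (Finset.Ico ((i1+1)*(e+j-1)+1) (rS e k j (i1+1)))
          (Finset.Ico ((i2+1)*(e+j-1)+1) (rS e k j (i2+1))) := by
      intro i1 i2 h12
      rw [Finset.disjoint_left]
      intro y hy1 hy2
      have hA := (Finset.mem_Ico.mp hy1).2
      have hB := (Finset.mem_Ico.mp hy2).1
      have hreg : rS e k j (i1+1) ≤ (i1+1+1)*(e+j-1) :=
        region_nonempty e k j he1 hj1 hjk' (i1+1)
      have hmul : (i1+1+1)*(e+j-1) ≤ (i2+1)*(e+j-1) :=
        Nat.mul_le_mul_right _ (by omega)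
      generalize hA1 : (i1+1+1)*(e+j-1) = A1 at hreg hmul
      generalize hA2 : (i2+1)*(e+j-1) = A2 at hmul hB
      omega
    have hpair : ∀ x ∈ Finset.range (2*(m+1)), ∀ y ∈ Finset.range (2*(m+1)), x ≠ y →
        Disjoint (Finset.Ico ((x+1)*(e+j-1)+1) (rS e k j (x+1)))
          (Finset.Ico ((y+1)*(e+j-1)+1) (rS e k j (y+1))) := by
      intro x _ y _ hxy
      rcases lt_or_gt_of_ne hxy with h | h
      · exact haux x y h
      · exact (haux y x h).symm
    have hcard : (GG e k j (m+1)).card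
        = (e - 1) + ∑ i ∈ Finset.range (2*(m+1)),
            (rS e k j (i+1) - ((i+1)*(e+j-1)+1)) := by
      rw [GG, Finset.card_union_of_disjoint hdisj, Finset.card_biUnion hpair,
        Nat.card_Ico]
      congr 1
      apply Finset.sum_congr rfl
      intro i _
      rw [Nat.card_Ico]
    have hcastE : ((e+j-1 : ℕ):ℤ) = (e:ℤ)+j-1 := by omega
    have hsumcast : ((∑ i ∈ Finset.range (2*(m+1)),
          (rS e k j (i+1) - ((i+1)*(e+j-1)+1)) : ℕ) : ℤ)
        = ∑ i ∈ Finset.range (2*(m+1)),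
            ((rS e k j (i+1) : ℤ) - ((i:ℤ)+1)*((e:ℤ)+(j:ℤ)-1) - 1) := by
      rw [Nat.cast_sum]
      apply Finset.sum_congr rfl
      intro i hi
      have h := hblk i (Finset.mem_range.mp hi)
      have hA : (((i+1)*(e+j-1) : ℕ) : ℤ) = ((i:ℤ)+1)*((e:ℤ)+(j:ℤ)-1) := by
        push_cast [hcastE]; ring
      rw [← hA]
      generalize hR : rS e k j (i+1) = R at h ⊢
      generalize hAA : (i+1)*(e+j-1) = A at h ⊢
      omega
    rw [hgen, hcard]
    push_cast [Nat.cast_sub he1, hsumcast, sum_blocks e k j (m+1)]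
    ring
end
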